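/- arXiv:1506.05769 — 4 statements merged into one kernel-verified Lean document; each statement's English description precedes it below -/
import Mathlib

section
/- If the complement graph G^c of a graph G contains an induced cycle of length at least 6, then G contains an induced cycle of length 4. -/
/-!
The complement of `C₄` is a pair of disjoint edges. In a cycle of length at least six, the
edges `{0, 1}` and `{3, 4}` have no edge between them, so they induce a copy of `C₄ᶜ`. An
induced `C₄ᶜ` in `Gᶜ` is, after complementing both graphs, an induced `C₄` in `G`.
-/

/-- `G` has an induced cycle of length `m` iff the cycle graph on `m` vertices embeds into `G`
as an induced subgraph (graph embeddings are isomorphisms onto induced subgraphs). -/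
def SimpleGraph.HasInducedCycle {V : Type*} (G : SimpleGraph V) (m : ℕ) : Prop :=
  3 ≤ m ∧ Nonempty (SimpleGraph.cycleGraph m ↪g G)

namespace SimpleGraph

theorem cycleGraph_adj_iff_of_lt {m : ℕ} {u v : Fin m} (hu : u.val + 1 < m)
    (hv : v.val + 1 < m) :
    (cycleGraph m).Adj u v ↔ u.val + 1 = v.val ∨ v.val + 1 = u.val := by
  rw [cycleGraph_adj']
  rcases lt_trichotomy u v with huv | rfl | hvu
  · rw [Fin.coe_sub_iff_lt.2 huv, Fin.sub_val_of_le huv.le]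
    omega
  · rw [Fin.sub_val_of_le le_rfl]
    omega
  · rw [Fin.sub_val_of_le hvu.le, Fin.coe_sub_iff_lt.2 hvu]
    omega

/-- Sends the edges `{0, 2}` and `{1, 3}` of `C₄ᶜ` to the edges `{0, 1}` and `{3, 4}` of `Cₘ`. -/
def complCycleGraphFourEmbedding {m : ℕ} (hm : 6 ≤ m) : (cycleGraph 4)ᶜ ↪g cycleGraph m :=
  let f : Fin 4 → Fin m := ![⟨0, by omega⟩, ⟨3, by omega⟩, ⟨1, by omega⟩, ⟨4, by omega⟩]
  have hf : ∀ i, (f i).val + 1 < m := by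
    intro i
    fin_cases i <;> simp [f] <;> omega
  { toFun := f
    inj' := fun i j hij => by
      fin_cases i <;> fin_cases j <;> simp_all [f, Fin.ext_iff]
    map_rel_iff' := fun {i j} => by
      change (cycleGraph m).Adj (f i) (f j) ↔ _
      rw [cycleGraph_adj_iff_of_lt (hf i) (hf j), compl_adj, cycleGraph_adj']
      fin_cases i <;> fin_cases j <;> simp [f] <;> decide }

end SimpleGraph

/-- If `Gᶜ` contains an induced cycle of length at least 6, then `G` contains
an induced cycle of length 4. -/
theorem hasInducedCycle_four_of_compl {V : Type*} (G : SimpleGraph V)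
    (m : ℕ) (hm : 6 ≤ m) (h : Gᶜ.HasInducedCycle m) : G.HasInducedCycle 4 := by
  obtain ⟨-, ⟨e⟩⟩ := h
  have f := e.comp (SimpleGraph.complCycleGraphFourEmbedding hm)
  exact ⟨by norm_num, ⟨SimpleGraph.Embedding.complEquiv.symm f⟩⟩
end

section
/- If xy is a co-two-pair of a graph G, then any induced matching of the graph G \ xy (obtained from G by deleting the edge xy) is also an induced matching of G. In particular, the induced matching number of G \ xy is at most the induced matching number of G. -/
/-- `M` is an induced matching of `G`: a set of pairwise vertex-disjoint edges of `G` such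
that the only edges of `G` between vertices covered by `M` are the edges of `M` themselves. -/
def SimpleGraph.IsInducedMatching {V : Type*} (G : SimpleGraph V) (M : Finset (Sym2 V)) : Prop :=
  (↑M : Set (Sym2 V)) ⊆ G.edgeSet ∧
  (∀ e ∈ M, ∀ f ∈ M, e ≠ f → ∀ u : V, u ∈ e → u ∉ f) ∧
  (∀ u v : V, (∃ e ∈ M, u ∈ e) → (∃ f ∈ M, v ∈ f) → G.Adj u v → s(u, v) ∈ M)

/-- The induced matching number of `G`: the largest size of an induced matching. -/
noncomputable def SimpleGraph.inducedMatchingNumber {V : Type*} (G : SimpleGraph V) : ℕ :=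
  sSup {n : ℕ | ∃ M : Finset (Sym2 V), G.IsInducedMatching M ∧ M.card = n}

/-- A two-pair of `H`: a pair of distinct non-adjacent vertices such that every induced path
of `H` connecting them has length exactly 2. -/
def SimpleGraph.TwoPair {V : Type*} (H : SimpleGraph V) (x y : V) : Prop :=
  x ≠ y ∧ ¬ H.Adj x y ∧
    ∀ (n : ℕ) (hn : 2 ≤ n) (f : SimpleGraph.pathGraph n ↪g H),
      f ⟨0, by omega⟩ = x → f ⟨n - 1, by omega⟩ = y → n = 3

/-- A co-two-pair of `G`: an edge `xy` of `G` such that `x, y` form a two-pair of `Gᶜ`. -/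
def SimpleGraph.CoTwoPair {V : Type*} (G : SimpleGraph V) (x y : V) : Prop :=
  G.Adj x y ∧ SimpleGraph.TwoPair Gᶜ x y

/-- If `xy` is a co-two-pair of `G`, then every induced matching of `G \ xy`
is an induced matching of `G`; in particular `inmat(G \ xy) ≤ inmat(G)`. -/
theorem isInducedMatching_of_deleteEdge_coTwoPair {V : Type*} (G : SimpleGraph V) (x y : V)
    (h : G.CoTwoPair x y) :
    (∀ M : Finset (Sym2 V),
        (G.deleteEdges {s(x, y)}).IsInducedMatching M → G.IsInducedMatching M) ∧
    (G.deleteEdges {s(x, y)}).inducedMatchingNumber ≤ G.inducedMatchingNumber := by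
  obtain ⟨hxy, hnexy, -, hpath⟩ := h
  classical
  -- Key claim: x and y cannot both be covered by an induced matching of G \ xy
  have key : ∀ M : Finset (Sym2 V), (G.deleteEdges {s(x, y)}).IsInducedMatching M →
      (∃ e ∈ M, x ∈ e) → (∃ f ∈ M, y ∈ f) → False := by
    rintro M ⟨hsub, hdisj, hind⟩ ⟨e, he, hxe⟩ ⟨f, hf, hyf⟩
    by_cases hef : e = f
    · subst hef
      have hexy : e = s(x, y) := (Sym2.mem_and_mem_iff hnexy).mp ⟨hxe, hyf⟩
      have := hsub he
      rw [hexy, SimpleGraph.edgeSet_deleteEdges] at this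
      exact this.2 rfl
    · have hynote : y ∉ e := hdisj f hf e he (fun hh => hef hh.symm) y hyf
      have hxnotf : x ∉ f := hdisj e he f hf hef x hxe
      -- no G-edge between a vertex of e and a vertex of f
      have cross : ∀ u v : V, u ∈ e → v ∈ f → s(u, v) ≠ s(x, y) → ¬ G.Adj u v := by
        intro u v hue hvf h1 hadj
        have h2 : (G.deleteEdges {s(x, y)}).Adj u v := by
          rw [SimpleGraph.deleteEdges_adj]
          exact ⟨hadj, by rw [Set.mem_singleton_iff]; exact h1⟩
        have h3 : s(u, v) ∈ M := hind u v ⟨e, he, hue⟩ ⟨f, hf, hvf⟩ h2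
        by_cases h4 : s(u, v) = e
        · exact hdisj e he f hf hef v (h4 ▸ Sym2.mem_mk_right u v) hvf
        · exact hdisj (s(u, v)) h3 e he h4 u (Sym2.mem_mk_left u v) hue
      obtain ⟨a, rfl⟩ := Sym2.mem_iff_exists.mp hxe
      obtain ⟨b, rfl⟩ := Sym2.mem_iff_exists.mp hyf
      have hexa := hsub he
      have hfyb := hsub hf
      rw [SimpleGraph.edgeSet_deleteEdges] at hexa hfyb
      have hGxa : G.Adj x a := hexa.1
      have hGyb : G.Adj y b := hfyb.1
      have hanoty : a ∉ s(y, b) := hdisj (s(x, a)) he (s(y, b)) hf hef a (Sym2.mem_mk_right x a)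
      have hay : a ≠ y := fun hh => hanoty (hh ▸ Sym2.mem_mk_left y b)
      have hab : a ≠ b := fun hh => hanoty (hh ▸ Sym2.mem_mk_right y b)
      have hxb : x ≠ b := fun hh => hxnotf (hh ▸ Sym2.mem_mk_right y b)
      have hxa : x ≠ a := hGxa.ne
      have hyb : y ≠ b := hGyb.ne
      -- cross non-adjacencies
      have nxb : ¬ G.Adj x b := cross x b (Sym2.mem_mk_left x a) (Sym2.mem_mk_right y b)
        (by intro hcon
            rcases Sym2.eq_iff.mp hcon with ⟨-, hh⟩ | ⟨hh, -⟩
            · exact hyb hh.symm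
            · exact hnexy hh)
      have nay : ¬ G.Adj a y := cross a y (Sym2.mem_mk_right x a) (Sym2.mem_mk_left y b)
        (by intro hcon
            rcases Sym2.eq_iff.mp hcon with ⟨hh, -⟩ | ⟨hh, -⟩
            · exact hxa hh.symm
            · exact hay hh)
      have nab : ¬ G.Adj a b := cross a b (Sym2.mem_mk_right x a) (Sym2.mem_mk_right y b)
        (by intro hcon
            rcases Sym2.eq_iff.mp hcon with ⟨hh, -⟩ | ⟨hh, -⟩
            · exact hxa hh.symm
            · exact hay hh)
      -- build the induced P4 in Gᶜ : x - b - a - y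
      have c1 : Gᶜ.Adj x b := ⟨hxb, nxb⟩
      have c2 : Gᶜ.Adj b a := ⟨fun hh => hab hh.symm, fun hh => nab hh.symm⟩
      have c3 : Gᶜ.Adj a y := ⟨hay, nay⟩
      have n1 : ¬ Gᶜ.Adj x a := fun hh => hh.2 hGxa
      have n2 : ¬ Gᶜ.Adj b y := fun hh => hh.2 hGyb.symm
      have n3 : ¬ Gᶜ.Adj x y := fun hh => hh.2 hxy
      have c1' : Gᶜ.Adj b x := c1.symm
      have c2' : Gᶜ.Adj a b := c2.symm
      have c3' : Gᶜ.Adj y a := c3.symm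
      have n1' : ¬ Gᶜ.Adj a x := fun hh => n1 hh.symm
      have n2' : ¬ Gᶜ.Adj y b := fun hh => n2 hh.symm
      have n3' : ¬ Gᶜ.Adj y x := fun hh => n3 hh.symm
      have i0 : ¬ Gᶜ.Adj x x := Gᶜ.irrefl
      have i1 : ¬ Gᶜ.Adj b b := Gᶜ.irrefl
      have i2 : ¬ Gᶜ.Adj a a := Gᶜ.irrefl
      have i3 : ¬ Gᶜ.Adj y y := Gᶜ.irrefl
      set g : Fin 4 → V := ![x, b, a, y] with hg
      have hinj : Function.Injective g := by
        intro i j hij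
        fin_cases i <;> fin_cases j <;> first
          | rfl
          | (exfalso; revert hij; norm_num [g]
             first
               | exact hxa | exact hxa.symm | exact hxb | exact hxb.symm
               | exact hnexy | exact hnexy.symm | exact hab | exact hab.symm
               | exact hay | exact hay.symm | exact hyb | exact hyb.symm)
      have hmap : ∀ i j : Fin 4, Gᶜ.Adj (g i) (g j) ↔ (SimpleGraph.pathGraph 4).Adj i j := by
        intro i j
        rw [SimpleGraph.pathGraph_adj]
        fin_cases i <;> fin_cases j <;> norm_num [g] <;> tauto
      refine absurd (hpath 4 (by omega) ⟨⟨g, hinj⟩, fun {i j} => hmap i j⟩ ?_ ?_) (by omega)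
      · show g ⟨0, by omega⟩ = x
        simp [hg]
      · show g ⟨4 - 1, by omega⟩ = y
        simp [hg]
  -- Part 1
  have part1 : ∀ M : Finset (Sym2 V),
      (G.deleteEdges {s(x, y)}).IsInducedMatching M → G.IsInducedMatching M := by
    intro M hM
    obtain ⟨hsub, hdisj, hind⟩ := hM
    refine ⟨?_, hdisj, ?_⟩
    · intro e he
      have := hsub he
      rw [SimpleGraph.edgeSet_deleteEdges] at this
      exact this.1
    · intro u v hu hv hadj
      by_cases h1 : s(u, v) = s(x, y)
      · exfalso
        rw [Sym2.eq_iff] at h1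
        rcases h1 with ⟨rfl, rfl⟩ | ⟨rfl, rfl⟩
        · exact key M ⟨hsub, hdisj, hind⟩ hu hv
        · exact key M ⟨hsub, hdisj, hind⟩ hv hu
      · exact hind u v hu hv
          (by rw [SimpleGraph.deleteEdges_adj]
              exact ⟨hadj, by rw [Set.mem_singleton_iff]; exact h1⟩)
  refine ⟨part1, ?_⟩
  -- Part 2
  set S := {n : ℕ | ∃ M : Finset (Sym2 V),
      (G.deleteEdges {s(x, y)}).IsInducedMatching M ∧ M.card = n} with hS
  set T := {n : ℕ | ∃ M : Finset (Sym2 V), G.IsInducedMatching M ∧ M.card = n} with hT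
  have hSsub : S ⊆ T := by
    rintro n ⟨M, hM, rfl⟩
    exact ⟨M, part1 M hM, rfl⟩
  have hSne : S.Nonempty := by
    refine ⟨0, ∅, ⟨?_, ?_, ?_⟩, by simp⟩
    · simp
    · simp
    · rintro u v ⟨e, he, -⟩ - -
      simp at he
  -- erasing s(x,y) from an induced matching of G gives an induced matching of G \ xy
  have erase_lem : ∀ M : Finset (Sym2 V), G.IsInducedMatching M →
      (G.deleteEdges {s(x, y)}).IsInducedMatching (M.erase s(x, y)) := by
    rintro M ⟨hsub, hdisj, hind⟩
    refine ⟨?_, ?_, ?_⟩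
    · intro e he
      have he' : e ∈ M.erase s(x, y) := he
      rw [SimpleGraph.edgeSet_deleteEdges]
      refine ⟨hsub (Finset.mem_of_mem_erase he'), ?_⟩
      rw [Set.mem_singleton_iff]
      exact Finset.ne_of_mem_erase he'
    · intro e he f hf
      exact hdisj e (Finset.mem_of_mem_erase he) f (Finset.mem_of_mem_erase hf)
    · rintro u v ⟨e, he, hue⟩ ⟨f, hf, hvf⟩ hadj
      rw [SimpleGraph.deleteEdges_adj] at hadj
      have hm : s(u, v) ∈ M := hind u v ⟨e, Finset.mem_of_mem_erase he, hue⟩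
        ⟨f, Finset.mem_of_mem_erase hf, hvf⟩ hadj.1
      refine Finset.mem_erase.mpr ⟨?_, hm⟩
      intro hcon
      exact hadj.2 (Set.mem_singleton_iff.mpr hcon)
  by_cases hbdd : BddAbove T
  · exact csSup_le_csSup hbdd hSne hSsub
  · have hSbdd : ¬ BddAbove S := by
      rintro ⟨c, hc⟩
      apply hbdd
      refine ⟨c + 1, ?_⟩
      rintro k ⟨M, hM, rfl⟩
      have h1 : (M.erase s(x, y)).card ∈ S := ⟨M.erase s(x, y), erase_lem M hM, rfl⟩
      have h2 : (M.erase s(x, y)).card ≤ c := hc h1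
      have h3 : M.card - 1 ≤ (M.erase s(x, y)).card := Finset.pred_card_le_card_erase
      omega
    show sSup S ≤ sSup T
    rw [csSup_of_not_bddAbove hSbdd, csSup_of_not_bddAbove hbdd]
end

section
/- Let G be a graph with at least one edge, over a field k with polynomial ring R on the vertices of G. Then the Castelnuovo–Mumford regularity of the edge ideal I(G) satisfies reg I(G) ≥ inmat(G) + 1, where inmat(G) is the induced matching number of G. -/
open MvPolynomial

noncomputable section

namespace CMReg

variable {k : Type*} [Field k] {σ : Type*} [Fintype σ] [DecidableEq σ] [LinearOrder σ]

/-- The degree-`d` homogeneous component of an ideal `I` of `k[x_s : s ∈ σ]`, as a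
`k`-vector space (`⊥` for negative `d`). -/
def degComp (I : Ideal (MvPolynomial σ k)) (d : ℤ) : Submodule k (MvPolynomial σ k) :=
  if 0 ≤ d then I.restrictScalars k ⊓ homogeneousSubmodule σ k d.toNat else ⊥

lemma mulX_mem (I : Ideal (MvPolynomial σ k)) (a : σ) (d : ℤ) (m : MvPolynomial σ k)
    (hm : m ∈ degComp I d) : X a * m ∈ degComp I (d + 1) := by
  unfold degComp at *
  split_ifs at hm with h
  · rw [if_pos (by omega)]
    rw [Submodule.mem_inf] at hm
    obtain ⟨h1, h2⟩ := hm
    rw [Submodule.mem_inf]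
    refine ⟨I.mul_mem_left _ h1, ?_⟩
    rw [mem_homogeneousSubmodule] at h2 ⊢
    have e : (d + 1).toNat = 1 + d.toNat := by omega
    rw [e]
    exact (isHomogeneous_X k a).mul h2
  · simp only [Submodule.mem_bot] at hm
    subst hm
    rw [mul_zero]
    exact zero_mem _

/-- The internal-degree-`j` strand of the Koszul complex `K(x₁,...,xₙ) ⊗ I` in homological
degree `i`: a direct sum of copies of the degree-`(j - i)` component of `I`, indexed by the
`i`-element subsets of the variables (the basis of `Λⁱ`). -/
abbrev KD (I : Ideal (MvPolynomial σ k)) (i j : ℕ) : Type _ :=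
  {S : Finset σ // S.card = i} → degComp I ((j : ℤ) - i)

/-- The Koszul differential `K_{i+1} → K_i` in internal degree `j`:
`(d f)(S) = ∑_{a ∉ S} (-1)^{|{b ∈ S : b < a}|} xₐ · f(S ∪ {a})`. -/
def kdiff (I : Ideal (MvPolynomial σ k)) (i j : ℕ) : KD I (i + 1) j →ₗ[k] KD I i j where
  toFun f S := ∑ a ∈ S.1ᶜ.attach,
    ((-1 : k) ^ (S.1.filter (fun b => b < a.1)).card) •
      (⟨X a.1 * (f ⟨insert a.1 S.1, by
          rw [Finset.card_insert_of_notMem (Finset.mem_compl.mp a.2), S.2]⟩ : _).1, by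
        have h := mulX_mem I a.1 _ _ (f ⟨insert a.1 S.1, by
          rw [Finset.card_insert_of_notMem (Finset.mem_compl.mp a.2), S.2]⟩).2
        rwa [show ((j : ℤ) - (i + 1 : ℕ)) + 1 = (j : ℤ) - i by push_cast; ring] at h⟩ :
        degComp I ((j : ℤ) - i))
  map_add' f g := by
    funext S
    rw [Pi.add_apply, ← Finset.sum_add_distrib]
    refine Finset.sum_congr rfl (fun a _ => ?_)
    rw [← smul_add]
    congr 1
    apply Subtype.ext
    simp [mul_add]
  map_smul' c f := by
    funext S
    rw [RingHom.id_apply, Pi.smul_apply, Finset.smul_sum]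
    refine Finset.sum_congr rfl (fun a _ => ?_)
    rw [smul_comm]
    congr 1
    apply Subtype.ext
    simp [mul_smul_comm]

/-- The cycles of the degree-`j` strand of the Koszul complex at homological degree `i`. -/
def cyclesAt (I : Ideal (MvPolynomial σ k)) (i j : ℕ) : Submodule k (KD I i j) :=
  match i with
  | 0 => ⊤
  | (i' + 1) => LinearMap.ker (kdiff I i' j)

/-- The graded Betti number `β_{ij}(I) = dim_k Tor_i(k, I)_j`, computed as the dimension of
the homology of the degree-`j` strand of `K(x) ⊗ I` at homological degree `i`. -/
def bettiNum (I : Ideal (MvPolynomial σ k)) (i j : ℕ) : ℕ :=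
  Module.finrank k (cyclesAt I i j) - Module.finrank k (LinearMap.range (kdiff I i j))

/-- The Castelnuovo–Mumford regularity `reg I = sup { j - i : β_{ij}(I) ≠ 0 }` of an ideal
of the polynomial ring, as an element of `ℕ∞`. -/
def reg (I : Ideal (MvPolynomial σ k)) : ℕ∞ :=
  sSup {d : ℕ∞ | ∃ i j : ℕ, bettiNum I i j ≠ 0 ∧ ((j - i : ℕ) : ℕ∞) = d}

end CMReg

/-- The edge ideal of a graph `G`: the ideal of `k[x_v : v ∈ V]` generated by the products
`x_u x_v` over the edges `{u, v}` of `G`. -/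
def edgeIdeal (k : Type*) [Field k] {V : Type*} (G : SimpleGraph V) :
    Ideal (MvPolynomial V k) :=
  Ideal.span {p | ∃ u v : V, G.Adj u v ∧ p = MvPolynomial.X u * MvPolynomial.X v}

/-!
Let `f(x, false) — f(x, true)`, `x : Option ι`, be an induced matching of `G` with `n + 1` edges,
`n = |ι|`, and let `U` and `C` be its sets of `false`- and `true`-endpoints. The Koszul chain with
coefficients in `R` supported on `U` with coefficient `x_C` has a boundary `z` whose coefficients
`± x_u x_C` (`u ∈ U`) all lie in `I(G)`, so `z` is a cycle of `K(x) ⊗ I(G)` in homological degree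
`n` and internal degree `2n + 2`. It is not a boundary there: consider the linear form `φ` which
sums, over the choices `S` of one endpoint of every edge other than `none`, with the sign of the
sequence `S`, the coefficient of the squarefree monomial on the remaining matched vertices in the
`S`-component. Then `φ z = ±1`. In `φ (∂ y)`, the terms where the Koszul differential adds an
endpoint of the edge `none` are coefficients of squarefree monomials on independent sets, which
vanish on `I(G)`; the other terms cancel in pairs, by switching which endpoint of an edge lies in
`S`. Hence `β_{n, 2n+2}(I(G)) ≠ 0` and `reg I(G) ≥ n + 2`.
-/

open MvPolynomial Finset

section SquarefreeMonomials

variable {σ R : Type*}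

def sqfreeExp (B : Finset σ) : σ →₀ ℕ := ∑ w ∈ B, Finsupp.single w 1

lemma degree_sqfreeExp (B : Finset σ) : (sqfreeExp B).degree = B.card := by
  simp [sqfreeExp]

variable [DecidableEq σ]

lemma sqfreeExp_apply (B : Finset σ) (w : σ) : sqfreeExp B w = if w ∈ B then 1 else 0 := by
  simp [sqfreeExp, Finsupp.finsetSum_apply, Finsupp.single_apply]

lemma support_sqfreeExp (B : Finset σ) : (sqfreeExp B).support = B := by
  ext w
  simp [sqfreeExp_apply]

lemma single_le_sqfreeExp {a : σ} {B : Finset σ} (ha : a ∈ B) :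
    Finsupp.single a 1 ≤ sqfreeExp B := fun w => by
  rw [sqfreeExp_apply, Finsupp.single_apply]
  split_ifs <;> simp_all

lemma sqfreeExp_sub_single {a : σ} {B : Finset σ} (ha : a ∈ B) :
    sqfreeExp B - Finsupp.single a 1 = sqfreeExp (B.erase a) := by
  ext w
  simp only [Finsupp.tsub_apply, sqfreeExp_apply, Finsupp.single_apply, mem_erase]
  by_cases h : w = a
  · simp [h, ha]
  · simp [h, Ne.symm h]

lemma coeff_sqfreeExp_X_mul [CommSemiring R] (B : Finset σ) (a : σ) (p : MvPolynomial σ R) :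
    coeff (sqfreeExp B) (X a * p) = if a ∈ B then coeff (sqfreeExp (B.erase a)) p else 0 := by
  rw [coeff_X_mul', support_sqfreeExp]
  split_ifs with ha
  · rw [sqfreeExp_sub_single ha]
  · rfl

end SquarefreeMonomials

section EdgeIdeal

variable {k : Type*} [Field k] {V : Type*} {G : SimpleGraph V}

lemma edgeIdeal_eq_span_monomial : edgeIdeal k G = Ideal.span ((fun m => monomial m (1 : k)) ''
    {m | ∃ u v, G.Adj u v ∧ m = Finsupp.single u 1 + Finsupp.single v 1}) := by
  rw [edgeIdeal]
  congr 1
  ext p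
  simp only [Set.mem_ofPred_eq, Set.mem_image]
  constructor
  · rintro ⟨u, v, huv, rfl⟩
    exact ⟨_, ⟨u, v, huv, rfl⟩, by rw [X, X, monomial_mul, one_mul]⟩
  · rintro ⟨_, ⟨u, v, huv, rfl⟩, rfl⟩
    exact ⟨u, v, huv, by rw [X, X, monomial_mul, one_mul]⟩

lemma mem_edgeIdeal_iff {p : MvPolynomial V k} : p ∈ edgeIdeal k G ↔
    ∀ m ∈ p.support, ∃ u v, G.Adj u v ∧ Finsupp.single u 1 + Finsupp.single v 1 ≤ m := by
  rw [edgeIdeal_eq_span_monomial, mem_ideal_span_monomial_image]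
  simp

lemma monomial_mem_edgeIdeal {u v : V} (huv : G.Adj u v) {m : V →₀ ℕ}
    (hm : Finsupp.single u 1 + Finsupp.single v 1 ≤ m) (c : k) : monomial m c ∈ edgeIdeal k G :=
  mem_edgeIdeal_iff.mpr fun _ hm' =>
    ⟨u, v, huv, mem_singleton.mp (support_monomial_subset hm') ▸ hm⟩

lemma coeff_sqfreeExp_eq_zero_of_mem_edgeIdeal [DecidableEq V] {B : Finset V}
    (hB : G.IsIndepSet B) {p : MvPolynomial V k} (hp : p ∈ edgeIdeal k G) :
    coeff (sqfreeExp B) p = 0 := by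
  by_contra h
  obtain ⟨u, v, huv, hle⟩ := mem_edgeIdeal_iff.mp hp _ (mem_support_iff.mpr h)
  have hmem : ∀ w, Finsupp.single w 1 ≤ sqfreeExp B → w ∈ B := fun w hw => by
    by_contra hwB
    simpa [sqfreeExp_apply, hwB] using hw w
  exact hB (hmem u (le_trans le_self_add hle)) (hmem v (le_trans le_add_self hle)) huv.ne huv

end EdgeIdeal

namespace CMReg

variable {k : Type*} [Field k] {σ : Type*} {I : Ideal (MvPolynomial σ k)}

section Chains

lemma mem_of_mem_degComp {d : ℤ} {p : MvPolynomial σ k} (hp : p ∈ degComp I d) : p ∈ I := by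
  unfold degComp at hp
  split_ifs at hp
  · exact hp.1
  · rw [(Submodule.mem_bot k).mp hp]
    exact I.zero_mem

lemma degComp_le_restrictTotalDegree (d : ℤ) :
    degComp I d ≤ restrictTotalDegree σ k d.toNat := by
  unfold degComp
  split_ifs
  · exact fun p hp => (mem_restrictTotalDegree σ d.toNat p).mpr
      ((mem_homogeneousSubmodule _ _).mp hp.2).totalDegree_le
  · exact bot_le

lemma mem_degComp_of_isHomogeneous {d : ℤ} {m : ℕ} (hd : d = m) {p : MvPolynomial σ k}
    (hpI : p ∈ I) (hp : p.IsHomogeneous m) : p ∈ degComp I d := by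
  unfold degComp
  rw [if_pos (by omega)]
  exact ⟨hpI, by simpa [hd] using hp⟩

instance [Fintype σ] (d : ℤ) : FiniteDimensional k (degComp I d) :=
  Submodule.finiteDimensional_of_le (degComp_le_restrictTotalDegree d)

def extendChain {i j : ℕ} (f : KD I i j) (S : Finset σ) : MvPolynomial σ k :=
  if h : S.card = i then (f ⟨S, h⟩ : MvPolynomial σ k) else 0

lemma extendChain_eq_of_coe_eq {i j : ℕ} {z : KD I i j} {g : Finset σ → MvPolynomial σ k}
    (hz : ∀ S, (z S : MvPolynomial σ k) = g S) (hg : ∀ T : Finset σ, T.card ≠ i → g T = 0) :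
    extendChain z = g := by
  funext T
  rw [extendChain]
  split_ifs with h
  · exact hz ⟨T, h⟩
  · exact (hg T h).symm

lemma extendChain_mem {i j : ℕ} (f : KD I i j) (S : Finset σ) : extendChain f S ∈ I := by
  unfold extendChain
  split_ifs
  exacts [mem_of_mem_degComp (f _).2, I.zero_mem]

end Chains

section KoszulSign

variable [DecidableEq σ] [LinearOrder σ]

lemma card_filter_lt_insert {a : σ} {S : Finset σ} (ha : a ∉ S) (b : σ) :
    #{c ∈ insert a S | c < b} = #{c ∈ S | c < b} + if a < b then 1 else 0 := by
  rw [filter_insert]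
  split_ifs with h
  · exact card_insert_of_notMem fun hc => ha (mem_of_mem_filter a hc)
  · rfl

lemma neg_one_pow_card_filter_lt_swap {a b : σ} {S : Finset σ} (hab : a ≠ b) (ha : a ∉ S)
    (hb : b ∉ S) :
    (-1 : k) ^ #{c ∈ S | c < a} * (-1 : k) ^ #{c ∈ insert a S | c < b}
      = -((-1 : k) ^ #{c ∈ S | c < b} * (-1 : k) ^ #{c ∈ insert b S | c < a}) := by
  rw [← pow_add, ← pow_add, card_filter_lt_insert ha, card_filter_lt_insert hb]
  rcases hab.lt_or_gt with h | h
  · rw [if_pos h, if_neg h.not_gt, ← add_assoc, pow_succ]; ring_nf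
  · rw [if_neg h.not_gt, if_pos h, ← add_assoc (#{c ∈ S | c < b}), pow_succ]; ring_nf

end KoszulSign

section KoszulComplex

variable [Fintype σ] [DecidableEq σ] [LinearOrder σ]

instance (i j : ℕ) : FiniteDimensional k (KD I i j) :=
  inferInstanceAs (FiniteDimensional k (_ → _))

def koszulD (f : Finset σ → MvPolynomial σ k) (S : Finset σ) : MvPolynomial σ k :=
  ∑ a ∈ Sᶜ, (-1 : k) ^ #{b ∈ S | b < a} • (X a * f (insert a S))

lemma koszulD_koszulD (f : Finset σ → MvPolynomial σ k) : koszulD (koszulD f) = 0 := by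
  funext S
  simp only [koszulD, mul_sum, smul_sum, mul_smul_comm, smul_smul, Pi.zero_apply]
  rw [sum_sigma']
  refine sum_involution (fun p _ => ⟨p.2, p.1⟩) ?_ ?_ ?_ ?_
  · rintro ⟨a, b⟩ hp
    simp only [mem_sigma, compl_insert, mem_erase, mem_compl] at hp
    obtain ⟨ha, hba, hb⟩ := hp
    rw [insert_comm b a S, mul_left_comm (X b) (X a),
      neg_one_pow_card_filter_lt_swap (Ne.symm hba) ha hb, neg_smul, neg_add_cancel]
  · rintro ⟨a, b⟩ hp - h
    simp only [mem_sigma, compl_insert, mem_erase, mem_compl] at hp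
    exact hp.2.1 (congrArg Sigma.fst h)
  · rintro ⟨a, b⟩ hp
    simp only [mem_sigma, compl_insert, mem_erase, mem_compl] at hp ⊢
    exact ⟨hp.2.2, Ne.symm hp.2.1, hp.1⟩
  · intros
    rfl

lemma koszulD_eq_zero_of_card_ne {f : Finset σ → MvPolynomial σ k} {i : ℕ}
    (hf : ∀ T : Finset σ, T.card ≠ i + 1 → f T = 0) {S : Finset σ} (hS : S.card ≠ i) :
    koszulD f S = 0 := by
  refine sum_eq_zero fun a ha => ?_
  rw [hf _ (by rw [card_insert_of_notMem (mem_compl.mp ha)]; omega), mul_zero, smul_zero]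

lemma coeff_sqfreeExp_koszulD (g : Finset σ → MvPolynomial σ k) {B S : Finset σ}
    (hBS : Disjoint B S) :
    coeff (sqfreeExp B) (koszulD g S) = ∑ a ∈ B,
      (-1 : k) ^ #{b ∈ S | b < a} * coeff (sqfreeExp (B.erase a)) (g (insert a S)) := by
  rw [koszulD, coeff_sum]
  refine (sum_subset (fun a ha => mem_compl.mpr (disjoint_left.mp hBS ha)) ?_).symm.trans ?_
  · intro a _ ha
    rw [coeff_smul, coeff_sqfreeExp_X_mul, if_neg ha, smul_zero]
  · refine sum_congr rfl fun a ha => ?_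
    rw [coeff_smul, coeff_sqfreeExp_X_mul, if_pos ha, smul_eq_mul]

lemma kdiff_apply_coe {i j : ℕ} (f : KD I (i + 1) j) (S : {S : Finset σ // S.card = i}) :
    (kdiff I i j f S : MvPolynomial σ k) = koszulD (extendChain f) S := by
  simp only [kdiff, LinearMap.coe_mk, AddHom.coe_mk, Submodule.coe_sum, SetLike.val_smul, koszulD]
  rw [← Finset.sum_attach (Sᶜ : Finset σ)]
  refine sum_congr rfl fun a _ => ?_
  rw [extendChain, dif_pos (by rw [card_insert_of_notMem (mem_compl.mp a.2), S.2])]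

lemma mem_cyclesAt_of_coe_eq_koszulD {i j : ℕ} (z : KD I i j) (Y : Finset σ → MvPolynomial σ k)
    (hz : ∀ S, (z S : MvPolynomial σ k) = koszulD Y S)
    (hY : ∀ T : Finset σ, T.card ≠ i → koszulD Y T = 0) : z ∈ cyclesAt I i j := by
  cases i with
  | zero => exact Submodule.mem_top
  | succ i =>
    refine LinearMap.mem_ker.mpr (funext fun S => Subtype.ext ?_)
    rw [kdiff_apply_coe, extendChain_eq_of_coe_eq hz hY, koszulD_koszulD]
    rfl

lemma range_kdiff_le_cyclesAt (i j : ℕ) : LinearMap.range (kdiff I i j) ≤ cyclesAt I i j := by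
  rintro _ ⟨y, rfl⟩
  exact mem_cyclesAt_of_coe_eq_koszulD _ (extendChain y) (kdiff_apply_coe y)
    fun T hT => koszulD_eq_zero_of_card_ne (fun T hT => dif_neg hT) hT

lemma bettiNum_ne_zero_of_linearMap {i j : ℕ} {z : KD I i j} (hz : z ∈ cyclesAt I i j)
    (φ : KD I i j →ₗ[k] k) (hφ : ∀ y, φ (kdiff I i j y) = 0) (hφz : φ z ≠ 0) :
    bettiNum I i j ≠ 0 := by
  have hlt : LinearMap.range (kdiff I i j) < cyclesAt I i j :=
    (range_kdiff_le_cyclesAt i j).lt_of_ne fun h => by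
      obtain ⟨y, rfl⟩ := (h ▸ hz : z ∈ LinearMap.range (kdiff I i j))
      exact hφz (hφ y)
  have := Submodule.finrank_lt_finrank_of_lt hlt
  unfold bettiNum
  omega

lemma le_reg_of_bettiNum_ne_zero {i j : ℕ} (h : bettiNum I i j ≠ 0) :
    ((j - i : ℕ) : ℕ∞) ≤ reg I :=
  le_sSup ⟨i, j, h, rfl⟩

end KoszulComplex

end CMReg

section Inversions

open Function

variable {ι α : Type*} [Fintype ι] [LinearOrder ι] [LinearOrder α]

def inversions (p : ι → α) : ℕ := #{x : ι × ι | x.1 < x.2 ∧ p x.2 < p x.1}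

/-- Replacing the value `p i` by a new value `w` is a transposition of the sequence `w, p` into
the sequence `p i, update p i w`, hence changes its number of inversions by an odd amount. -/
lemma odd_inversions_add_inversions_update [DecidableEq ι] {p : ι → α} {i : ι} {w : α}
    (hw : w ≠ p i) (hpw : ∀ j ≠ i, p j ≠ w) (hpi : ∀ j ≠ i, p j ≠ p i) :
    Odd (inversions p + #{j | p j < w}
      + (inversions (update p i w) + #{j | update p i w j < p i})) := by
  set q := update p i w
  have hq : ∀ j ≠ i, q j = p j := fun j hj => update_of_ne hj _ _
  set D : ι × ι → ZMod 2 := fun x =>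
    (if x.1 < x.2 ∧ p x.2 < p x.1 then 1 else 0) + (if x.1 < x.2 ∧ q x.2 < q x.1 then 1 else 0)
  have hD : ∀ x, D x = (if x.1 = i then D x else 0) + (if x.2 = i then D x else 0) := by
    rintro ⟨a, b⟩
    by_cases ha : a = i <;> by_cases hb : b = i
    · simp [D, ha, hb]
    · simp [ha, hb]
    · simp [ha, hb]
    · simp only [D, ha, hb, hq a ha, hq b hb, CharTwo.add_self_eq_zero, if_false]
  have hF : ∀ j ≠ i, D (i, j) + D (j, i)
      + ((if p j < w then 1 else 0) + (if q j < p i then 1 else 0)) = 0 := by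
    intro j hj
    simp only [D, hq j hj, update_self, q]
    rcases lt_or_gt_of_ne hj with hij | hij <;>
      rcases lt_or_gt_of_ne (hpw j hj) with h1 | h1 <;>
        rcases lt_or_gt_of_ne (hpi j hj) with h2 | h2 <;>
          simp [hij, hij.not_gt, h1, h1.not_gt, h2, h2.not_gt] <;> decide
  have hsum : ∑ x, D x = ∑ j, (D (i, j) + D (j, i)) := by
    rw [Finset.sum_congr rfl fun x _ => hD x, sum_add_distrib, Fintype.sum_prod_type,
      Fintype.sum_prod_type, sum_add_distrib, Fintype.sum_eq_single i fun a ha => by simp [ha]]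
    simp
  rw [← ZMod.natCast_eq_one_iff_odd]
  push_cast
  simp only [inversions, natCast_card_filter]
  calc _ = ∑ x, D x + ∑ j, ((if p j < w then 1 else 0) + (if q j < p i then 1 else 0)) := by
        simp only [D, sum_add_distrib]; ring
    _ = D (i, i) + D (i, i) + ((if p i < w then 1 else 0) + (if q i < p i then 1 else 0)) := by
        rw [hsum, ← sum_add_distrib]
        exact Fintype.sum_eq_single i hF
    _ = 1 := by
        rcases lt_or_gt_of_ne hw with h | h <;> simp [q, D, h, h.not_gt]

lemma neg_one_pow_eq_neg_of_odd_add {R : Type*} [Ring R] {m n : ℕ} (h : Odd (m + n)) :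
    (-1 : R) ^ m = -(-1 : R) ^ n := by
  rcases Nat.even_or_odd n with hn | hn
  · rw [(Nat.odd_add.mp h |>.mpr hn).neg_one_pow, hn.neg_one_pow]
  · rw [(Nat.odd_add'.mp h |>.mp hn).neg_one_pow, hn.neg_one_pow, neg_neg]

end Inversions

namespace SimpleGraph

variable {V : Type*} {G : SimpleGraph V} {κ : Type*}

/-- The graph `|κ| K₂` of the disjoint edges `(x, false) — (x, true)`. Graph embeddings `↪g` are
induced, so an embedding `matchingGraph κ ↪g G` is an induced matching of `G` indexed by `κ`. -/
abbrev matchingGraph (κ : Type*) : SimpleGraph (κ × Bool) := (⊥ : SimpleGraph κ).boxProd ⊤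

lemma matchingGraph_embedding_adj_iff (f : matchingGraph κ ↪g G)
    {p q : κ × Bool} : G.Adj (f p) (f q) ↔ p.1 = q.1 ∧ p.2 ≠ q.2 := by
  rw [f.map_adj_iff, boxProd_adj]
  simp [and_comm]

lemma isIndepSet_of_forall_exists_notMem (f : matchingGraph κ ↪g G)
    {B : Set V} (hBf : B ⊆ Set.range f) (hB : ∀ x, ∃ β, f (x, β) ∉ B) : G.IsIndepSet B := by
  rintro u hu v hv - huv
  obtain ⟨⟨x, b⟩, rfl⟩ := hBf hu
  obtain ⟨⟨y, b'⟩, rfl⟩ := hBf hv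
  obtain ⟨rfl, hbb'⟩ := (matchingGraph_embedding_adj_iff f).mp huv
  obtain ⟨β, hβ⟩ := hB x
  have : β = b ∨ β = b' := by revert hbb'; cases b <;> cases b' <;> cases β <;> simp
  rcases this with rfl | rfl
  exacts [hβ hu, hβ hv]

noncomputable def sym2End (e : Sym2 V) (b : Bool) : V := if b then e.out.2 else e.out.1

lemma sym2End_mem (e : Sym2 V) (b : Bool) : sym2End e b ∈ e := by
  unfold sym2End
  split_ifs
  exacts [e.out_snd_mem, e.out_fst_mem]

lemma adj_sym2End {e : Sym2 V} (he : e ∈ G.edgeSet) {b b' : Bool} (hb : b ≠ b') :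
    G.Adj (sym2End e b) (sym2End e b') := by
  have hadj : G.Adj e.out.1 e.out.2 := by rwa [← mem_edgeSet, Sym2.mk, e.out_eq]
  cases b <;> cases b' <;> simp_all [sym2End, hadj.symm]

namespace IsInducedMatching

variable {M : Finset (Sym2 V)}

lemma eq_of_mem_of_mem (hM : G.IsInducedMatching M) {e e' : Sym2 V} (he : e ∈ M) (he' : e' ∈ M)
    {v : V} (hv : v ∈ e) (hv' : v ∈ e') : e = e' :=
  by_contra fun h => hM.2.1 e he e' he' h v hv hv'

noncomputable def embedding (hM : G.IsInducedMatching M) {κ : Type*} (φ : κ ≃ M) :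
    matchingGraph κ ↪g G where
  toFun p := sym2End (φ p.1).1 p.2
  inj' := by
    rintro ⟨x, b⟩ ⟨x', b'⟩ (h : sym2End (φ x).1 b = sym2End (φ x').1 b')
    have hx : φ x = φ x' := Subtype.ext <| hM.eq_of_mem_of_mem (φ x).2 (φ x').2
      (sym2End_mem _ b) (h ▸ sym2End_mem _ b')
    obtain rfl := φ.injective hx
    by_contra hb
    exact (adj_sym2End (hM.1 (φ x).2) fun h' => hb (by rw [h'])).ne h
  map_rel_iff' := by
    rintro ⟨x, b⟩ ⟨x', b'⟩
    simp only [boxProd_adj, bot_adj, top_adj, false_and, false_or]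
    constructor
    · intro hadj
      have hs := hM.2.2 _ _ ⟨_, (φ x).2, sym2End_mem _ b⟩ ⟨_, (φ x').2, sym2End_mem _ b'⟩ hadj
      have hx : φ x = φ x' := Subtype.ext <|
        (hM.eq_of_mem_of_mem hs (φ x).2 (Sym2.mem_mk_left _ _) (sym2End_mem _ b)).symm.trans
          (hM.eq_of_mem_of_mem hs (φ x').2 (Sym2.mem_mk_right _ _) (sym2End_mem _ b'))
      obtain rfl := φ.injective hx
      exact ⟨fun hb => hadj.ne (by rw [hb]), rfl⟩
    · rintro ⟨hb, rfl⟩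
      exact adj_sym2End (hM.1 (φ x).2) hb

end IsInducedMatching

section InducedMatchingNumber

variable [Fintype V]

lemma bddAbove_card_isInducedMatching :
    BddAbove {n : ℕ | ∃ M : Finset (Sym2 V), G.IsInducedMatching M ∧ M.card = n} := by
  classical
  exact ⟨Fintype.card (Sym2 V), by rintro _ ⟨M, -, rfl⟩; exact card_le_univ M⟩

lemma exists_isInducedMatching_card_eq (G : SimpleGraph V) :
    ∃ M : Finset (Sym2 V), G.IsInducedMatching M ∧ M.card = G.inducedMatchingNumber := by
  have h0 : 0 ∈ {n : ℕ | ∃ M : Finset (Sym2 V), G.IsInducedMatching M ∧ M.card = n} :=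
    ⟨∅, by simp [IsInducedMatching], rfl⟩
  exact Nat.sSup_mem ⟨0, h0⟩ bddAbove_card_isInducedMatching

lemma one_le_inducedMatchingNumber (hE : G.edgeSet.Nonempty) : 1 ≤ G.inducedMatchingNumber := by
  obtain ⟨e, he⟩ := hE
  refine le_csSup bddAbove_card_isInducedMatching ⟨{e}, ⟨?_, ?_, ?_⟩, card_singleton e⟩
  · simpa using he
  · simp
  · rintro u v ⟨_, h, hu⟩ ⟨_, h', hv⟩ huv
    rw [mem_singleton] at h h' ⊢
    subst h h'
    exact Sym2.eq_of_ne_mem huv.ne (Sym2.mem_mk_left u v) (Sym2.mem_mk_right u v) hu hv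

end InducedMatchingNumber

end SimpleGraph

namespace CMReg

open SimpleGraph Function

section MatchedVertices

variable {V : Type*} {G : SimpleGraph V} {ι : Type*}

lemma injective_apply_some {f : matchingGraph (Option ι) ↪g G} (c : ι → Bool) :
    Injective fun i => f (some i, c i) :=
  fun i j h => (by simpa using f.injective h : i = j ∧ _).1

variable [DecidableEq V] [Fintype ι] (f : matchingGraph (Option ι) ↪g G)

def matchedVertices : Finset V := univ.image f

def ends (b : Bool) : Finset V := univ.image fun x => f (x, b)

def pick (c : ι → Bool) : Finset V := univ.image fun i => f (some i, c i)

variable {f}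

lemma card_pick (c : ι → Bool) : (pick f c).card = Fintype.card ι :=
  card_image_of_injective _ (injective_apply_some c)

lemma card_ends (b : Bool) : (ends f b).card = Fintype.card ι + 1 := by
  rw [ends, card_image_of_injective _ fun x y h => (by simpa using f.injective h : x = y),
    card_univ, Fintype.card_option]

lemma insert_pick_update [DecidableEq ι] (c : ι → Bool) (i : ι) :
    insert (f (some i, !c i)) (pick f c)
      = insert (f (some i, c i)) (pick f (update c i (!c i))) := by
  ext v
  simp only [pick, mem_insert, mem_image, mem_univ, true_and]
  constructor
  · rintro (rfl | ⟨j, rfl⟩)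
    · exact Or.inr ⟨i, by simp⟩
    · by_cases hj : j = i
      · exact Or.inl (hj ▸ rfl)
      · exact Or.inr ⟨j, by simp [hj]⟩
  · rintro (rfl | ⟨j, rfl⟩)
    · exact Or.inr ⟨i, rfl⟩
    · by_cases hj : j = i
      · exact Or.inl (by simp [hj])
      · exact Or.inr ⟨j, by simp [hj]⟩

lemma ends_false_eq_insert_pick :
    ends f false = insert (f (none, false)) (pick f fun _ => false) := by
  ext v
  simp only [ends, pick, mem_insert, mem_image, mem_univ, true_and]
  constructor
  · rintro ⟨(_ | i), rfl⟩
    exacts [Or.inl rfl, Or.inr ⟨i, rfl⟩]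
  · rintro (rfl | ⟨i, rfl⟩)
    exacts [⟨none, rfl⟩, ⟨some i, rfl⟩]

lemma eq_of_insert_pick_eq_ends_false {c : ι → Bool} {a : V} (ha : a ∉ pick f c)
    (h : insert a (pick f c) = ends f false) : c = (fun _ => false) ∧ a = f (none, false) := by
  have hmem : ∀ v ∈ insert a (pick f c), ∃ x, f (x, false) = v := fun v hv => by
    rw [h] at hv
    simpa [ends] using hv
  have hc : c = fun _ => false := funext fun i => by
    obtain ⟨x, hx⟩ := hmem _ (mem_insert_of_mem (mem_image_of_mem _ (mem_univ i)))
    exact (Prod.ext_iff.mp (f.injective hx)).2.symm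
  refine ⟨hc, ?_⟩
  obtain ⟨(_ | i), rfl⟩ := hmem a (mem_insert_self _ _)
  · rfl
  · exact absurd (hc ▸ mem_image_of_mem _ (mem_univ i)) ha

lemma matchedVertices_sdiff_ends_false : matchedVertices f \ ends f false = ends f true := by
  ext v
  simp only [matchedVertices, ends, mem_sdiff, mem_image, mem_univ, true_and, not_exists]
  constructor
  · rintro ⟨⟨⟨x, _ | _⟩, rfl⟩, h⟩
    exacts [absurd rfl (h x), ⟨x, rfl⟩]
  · rintro ⟨x, rfl⟩
    exact ⟨⟨_, rfl⟩, fun y h => by simpa using f.injective h⟩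

lemma card_filter_lt_pick [LinearOrder V] (c : ι → Bool) (a : V) :
    #{b ∈ pick f c | b < a} = #{i | f (some i, c i) < a} := by
  rw [pick, filter_image, card_image_of_injective _ (injective_apply_some c)]

end MatchedVertices

section Witness

variable {k : Type*} [Field k] {V : Type*} [DecidableEq V] {G : SimpleGraph V} {ι : Type*}
  [Fintype ι] {f : matchingGraph (Option ι) ↪g G}

variable (k f) in
def witnessChain : Finset V → MvPolynomial V k :=
  Pi.single (ends f false) (monomial (sqfreeExp (ends f true)) 1)

lemma X_mul_witness_mem_edgeIdeal {a : V} (ha : a ∈ ends f false) :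
    X a * monomial (sqfreeExp (ends f true)) (1 : k) ∈ edgeIdeal k G := by
  obtain ⟨x, -, rfl⟩ := mem_image.mp ha
  have hadj : G.Adj (f (x, false)) (f (x, true)) :=
    (matchingGraph_embedding_adj_iff f).mpr ⟨rfl, Bool.false_ne_true⟩
  have hle : Finsupp.single (f (x, true)) 1 ≤ sqfreeExp (ends f true) :=
    single_le_sqfreeExp (mem_image_of_mem _ (mem_univ x))
  rw [X, monomial_mul, one_mul]
  exact monomial_mem_edgeIdeal hadj (add_le_add le_rfl hle) 1

section Cycle

variable [Fintype V] [LinearOrder V]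

lemma koszulD_witnessChain_mem (S : Finset V) :
    koszulD (witnessChain k f) S ∈ degComp (edgeIdeal k G)
      (((2 * Fintype.card ι + 2 : ℕ) : ℤ) - (Fintype.card ι : ℕ)) := by
  refine Submodule.sum_mem _ fun a _ => Submodule.smul_mem _ _ ?_
  rw [witnessChain, Pi.single_apply]
  split_ifs with h
  · refine mem_degComp_of_isHomogeneous (m := Fintype.card ι + 2) (by push_cast; ring)
      (X_mul_witness_mem_edgeIdeal (h ▸ mem_insert_self a S)) ?_
    have := (isHomogeneous_X k a).mul
      (isHomogeneous_monomial (1 : k) (degree_sqfreeExp (ends f true)))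
    rwa [card_ends, add_comm 1, add_assoc] at this
  · rw [mul_zero]
    exact zero_mem _

variable (k f) in
def witnessCycle : KD (edgeIdeal k G) (Fintype.card ι) (2 * Fintype.card ι + 2) :=
  fun S => ⟨koszulD (witnessChain k f) S, by exact koszulD_witnessChain_mem S.1⟩

lemma witnessCycle_mem_cyclesAt :
    witnessCycle k f ∈ cyclesAt (edgeIdeal k G) (Fintype.card ι) (2 * Fintype.card ι + 2) := by
  refine mem_cyclesAt_of_coe_eq_koszulD _ (witnessChain k f) (fun _ => rfl) fun T hT => ?_
  refine koszulD_eq_zero_of_card_ne (i := Fintype.card ι) (fun T hT => ?_) hT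
  rw [witnessChain, Pi.single_eq_of_ne]
  rintro rfl
  exact hT (card_ends false)

end Cycle

section Form

variable [LinearOrder V] [LinearOrder ι]

variable (k f) in
def witnessForm (j : ℕ) : KD (edgeIdeal k G) (Fintype.card ι) j →ₗ[k] k :=
  ∑ c : ι → Bool, (-1 : k) ^ inversions (fun i => f (some i, c i)) •
    (lcoeff k (sqfreeExp (matchedVertices f \ pick f c)) ∘ₗ (degComp _ _).subtype ∘ₗ
      LinearMap.proj (⟨pick f c, card_pick c⟩ : {S : Finset V // S.card = Fintype.card ι}))

variable (f) in
/-- The summand of `witnessForm` at `c`, after expanding a Koszul boundary `koszulD g`. -/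
def formTerm (g : Finset V → MvPolynomial V k) (c : ι → Bool) (a : V) : k :=
  (-1 : k) ^ inversions (fun i => f (some i, c i)) * (-1 : k) ^ #{b ∈ pick f c | b < a} *
    coeff (sqfreeExp (matchedVertices f \ insert a (pick f c))) (g (insert a (pick f c)))

lemma formTerm_none_eq_zero {g : Finset V → MvPolynomial V k} (hg : ∀ S, g S ∈ edgeIdeal k G)
    (c : ι → Bool) (b : Bool) : formTerm f g c (f (none, b)) = 0 := by
  rw [formTerm, coeff_sqfreeExp_eq_zero_of_mem_edgeIdeal _ (hg _), mul_zero]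
  refine isIndepSet_of_forall_exists_notMem f (fun v hv => ?_) ?_
  · obtain ⟨p, -, rfl⟩ := mem_image.mp (mem_sdiff.mp (mem_coe.mp hv)).1
    exact ⟨p, rfl⟩
  · rintro (_ | i)
    · exact ⟨b, fun h => (mem_sdiff.mp (mem_coe.mp h)).2 (mem_insert_self _ _)⟩
    · exact ⟨c i, fun h => (mem_sdiff.mp (mem_coe.mp h)).2
        (mem_insert_of_mem (mem_image_of_mem _ (mem_univ i)))⟩

lemma sum_formTerm_eq_sum_some {g : Finset V → MvPolynomial V k}
    (hg : ∀ S, g S ∈ edgeIdeal k G) (c : ι → Bool) :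
    ∑ a ∈ matchedVertices f \ pick f c, formTerm f g c a
      = ∑ i, formTerm f g c (f (some i, !c i)) := by
  rw [← sum_image fun i _ j _ h => injective_apply_some (fun i => !c i) h]
  refine (sum_subset (fun a ha => ?_) fun a ha hna => ?_).symm
  · obtain ⟨i, -, rfl⟩ := mem_image.mp ha
    simp [matchedVertices, pick]
  · obtain ⟨⟨_ | i, β⟩, -, rfl⟩ := mem_image.mp (mem_sdiff.mp ha).1
    · exact formTerm_none_eq_zero hg c β
    · cases Bool.eq_or_eq_not β (c i) with
      | inl h => exact absurd (h ▸ mem_image_of_mem _ (mem_univ i)) (mem_sdiff.mp ha).2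
      | inr h => exact absurd (h ▸ mem_image_of_mem _ (mem_univ i)) hna

lemma formTerm_add_formTerm_update (g : Finset V → MvPolynomial V k) (c : ι → Bool) (i : ι) :
    formTerm f g c (f (some i, !c i)) + formTerm f g (update c i (!c i)) (f (some i, c i)) = 0 := by
  have hupdate : ∀ j, f (some j, update c i (!c i) j)
      = update (fun j => f (some j, c j)) i (f (some i, !c i)) j :=
    apply_update (fun j b => f (some j, b)) c i (!c i)
  have hne : ∀ j ≠ i, ∀ b b', f (some j, b) ≠ f (some i, b') := fun j hj b b' h =>
    hj (by simpa using f.injective h : j = i ∧ _).1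
  have hsign : (-1 : k) ^ inversions (fun j => f (some j, c j))
        * (-1 : k) ^ #{b ∈ pick f c | b < f (some i, !c i)}
      = -((-1 : k) ^ inversions (fun j => f (some j, update c i (!c i) j))
        * (-1 : k) ^ #{b ∈ pick f (update c i (!c i)) | b < f (some i, c i)}) := by
    simp only [← pow_add, card_filter_lt_pick, hupdate]
    exact neg_one_pow_eq_neg_of_odd_add (odd_inversions_add_inversions_update (by simp)
      (fun j hj => hne j hj _ _) (fun j hj => hne j hj _ _))
  rw [formTerm, formTerm, insert_pick_update, hsign]
  ring

lemma formTerm_witnessChain_eq_zero {c : ι → Bool} {a : V} (ha : a ∉ pick f c)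
    (hca : ¬(c = (fun _ => false) ∧ a = f (none, false))) :
    formTerm f (witnessChain k f) c a = 0 := by
  rw [formTerm, witnessChain,
    Pi.single_eq_of_ne fun h => hca (eq_of_insert_pick_eq_ends_false ha h), coeff_zero, mul_zero]

variable [Fintype V]

lemma witnessForm_eq_sum_formTerm {j : ℕ} (h : KD (edgeIdeal k G) (Fintype.card ι) j)
    (g : Finset V → MvPolynomial V k) (hg : ∀ S, (h S : MvPolynomial V k) = koszulD g S) :
    witnessForm k f j h = ∑ c, ∑ a ∈ matchedVertices f \ pick f c, formTerm f g c a := by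
  simp only [witnessForm, LinearMap.coe_sum, Finset.sum_apply, LinearMap.smul_apply,
    LinearMap.comp_apply, LinearMap.proj_apply, Submodule.subtype_apply, lcoeff_apply, hg,
    coeff_sqfreeExp_koszulD g sdiff_disjoint, smul_eq_mul, mul_sum, formTerm, sdiff_insert,
    mul_assoc]

lemma witnessForm_kdiff {j : ℕ} (y : KD (edgeIdeal k G) (Fintype.card ι + 1) j) :
    witnessForm k f j (kdiff _ _ j y) = 0 := by
  rw [witnessForm_eq_sum_formTerm _ _ (kdiff_apply_coe y)]
  simp only [sum_formTerm_eq_sum_some (extendChain_mem y)]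
  rw [← Fintype.sum_prod_type']
  refine sum_ninvolution (fun p => (update p.1 p.2 (!p.1 p.2), p.2)) (fun p => ?_) (fun p _ h => ?_)
    (fun _ => mem_univ _) (fun p => ?_)
  · simpa using formTerm_add_formTerm_update (extendChain y) p.1 p.2
  · simpa using congrFun (congrArg Prod.fst h) p.2
  · simp

lemma witnessForm_witnessCycle :
    witnessForm k f _ (witnessCycle k f) = (-1 : k) ^ inversions (fun i => f (some i, false))
      * (-1 : k) ^ #{b ∈ pick f (fun _ => false) | b < f (none, false)} := by
  have hmem : f (none, false) ∈ matchedVertices f \ pick f (fun _ => false) := by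
    refine mem_sdiff.mpr ⟨mem_image_of_mem _ (mem_univ _), fun h => ?_⟩
    obtain ⟨i, -, hi⟩ := mem_image.mp h
    simpa using f.injective hi
  rw [witnessForm_eq_sum_formTerm _ (witnessChain k f) fun _ => rfl,
    Fintype.sum_eq_single (fun _ : ι => false), sum_eq_single_of_mem _ hmem]
  · rw [formTerm, ← ends_false_eq_insert_pick, witnessChain, Pi.single_eq_same,
      matchedVertices_sdiff_ends_false, coeff_monomial, if_pos rfl, mul_one]
  · exact fun a ha hne => formTerm_witnessChain_eq_zero (mem_sdiff.mp ha).2 fun h => hne h.2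
  · exact fun c hc => sum_eq_zero fun a ha =>
      formTerm_witnessChain_eq_zero (mem_sdiff.mp ha).2 fun h => hc h.1

theorem bettiNum_edgeIdeal_ne_zero (f : matchingGraph (Option ι) ↪g G) :
    bettiNum (edgeIdeal k G) (Fintype.card ι) (2 * Fintype.card ι + 2) ≠ 0 := by
  refine bettiNum_ne_zero_of_linearMap (witnessCycle_mem_cyclesAt (f := f)) (witnessForm k f _)
    witnessForm_kdiff ?_
  rw [witnessForm_witnessCycle]
  simp

theorem card_add_two_le_reg_edgeIdeal (f : matchingGraph (Option ι) ↪g G) :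
    ((Fintype.card ι + 2 : ℕ) : ℕ∞) ≤ reg (edgeIdeal k G) := by
  have := le_reg_of_bettiNum_ne_zero (bettiNum_edgeIdeal_ne_zero (k := k) f)
  rwa [show 2 * Fintype.card ι + 2 - Fintype.card ι = Fintype.card ι + 2 by omega] at this

end Form

end Witness

end CMReg

/-- For a graph `G` with at least one edge,
`reg I(G) ≥ inmat(G) + 1`. -/
theorem reg_edgeIdeal_ge_inducedMatchingNumber {k : Type*} [Field k] {V : Type*}
    [Fintype V] [DecidableEq V] [LinearOrder V] (G : SimpleGraph V)
    (hE : G.edgeSet.Nonempty) :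
    ((G.inducedMatchingNumber + 1 : ℕ) : ℕ∞) ≤ CMReg.reg (edgeIdeal k G) := by
  obtain ⟨M, hM, hcard⟩ := G.exists_isInducedMatching_card_eq
  obtain ⟨m, hm⟩ := Nat.exists_eq_add_of_le' (G.one_le_inducedMatchingNumber hE)
  have hindex : Fintype.card (Option (Fin m)) = Fintype.card M := by simp [hcard, hm]
  have := CMReg.card_add_two_le_reg_edgeIdeal (k := k) (hM.embedding (Fintype.equivOfCardEq hindex))
  simpa [hm, add_assoc, one_add_one_eq_two] using this
end
end

section
/- Let G be a graph and suppose I(G) = U + V where U and V are edge ideals of subgraphs with 2-linear resolutions generated in degree 2, and U ∩ V ⊆ m·U and U ∩ V ⊆ m·V where m is the graded maximal ideal. Then the decomposition I(G) = U + V is a Betti splitting, i.e., β_{i,j}(I(G)) = β_{i,j}(U) + β_{i,j}(V) + β_{i-1,j}(U ∩ V) for all i, j. -/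
open MvPolynomial

noncomputable section

/-!
Tensoring `0 → U ∩ V → U ⊕ V → U + V → 0` with the Koszul complex of the variables gives, in each
internal degree `j`, a short exact sequence of complexes of finite-dimensional vector spaces (for
graded `U`, `V`). The Betti splitting formula is then a dimension count, valid as soon as every
cycle of `K ⊗ (U ∩ V)` becomes a boundary in `K ⊗ U` and in `K ⊗ V`, i.e. the connecting maps of
the long exact sequence vanish. For `U` with a `d`-linear resolution this holds for degree
reasons: `(K_i ⊗ U)_j = 0` for `j < i + d` as `U ⊆ m^d`; `(K_i ⊗ (U ∩ V))_{i+d} = 0` as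
`U ∩ V ⊆ m^{d+1}`; and for `j > i + d` all cycles of `K ⊗ U` are boundaries since `reg U ≤ d`.
-/

section FinrankLemmas

variable {K M N : Type*} [Field K] [AddCommGroup M] [Module K M] [AddCommGroup N] [Module K N]

theorem Submodule.finrank_map_add_finrank_inf_ker [FiniteDimensional K M] (f : M →ₗ[K] N)
    (p : Submodule K M) :
    Module.finrank K (p.map f) + Module.finrank K ↥(p ⊓ LinearMap.ker f) = Module.finrank K p := by
  have h := LinearMap.finrank_range_add_finrank_ker (f.domRestrict p)
  rw [LinearMap.range_domRestrict, LinearMap.ker_domRestrict] at h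
  rw [← h, ← Submodule.finrank_map_subtype_eq p ((LinearMap.ker f).comap p.subtype),
    Submodule.map_comap_subtype]

theorem Submodule.finrank_prod [FiniteDimensional K M] [FiniteDimensional K N]
    (p : Submodule K M) (q : Submodule K N) :
    Module.finrank K (p.prod q) = Module.finrank K p + Module.finrank K q := by
  have h : p.prod q = LinearMap.range (p.subtype.prodMap q.subtype) := by
    rw [LinearMap.range_prodMap, p.range_subtype, q.range_subtype]
  rw [h, LinearMap.finrank_range_of_inj (p.injective_subtype.prodMap q.injective_subtype),
    Module.finrank_prod]

end FinrankLemmas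

namespace LinearChain

variable {K : Type*} [Field K]

section Cycles

variable {X : ℕ → Type*} [∀ n, AddCommGroup (X n)] [∀ n, Module K (X n)]

def cycles (d : ∀ n, X (n + 1) →ₗ[K] X n) : ∀ n, Submodule K (X n)
  | 0 => ⊤
  | n + 1 => LinearMap.ker (d n)

def homologyFinrank (d : ∀ n, X (n + 1) →ₗ[K] X n) (n : ℕ) : ℕ :=
  Module.finrank K (cycles d n) - Module.finrank K (LinearMap.range (d n))

theorem range_le_cycles {d : ∀ n, X (n + 1) →ₗ[K] X n} (hd : ∀ n, d n ∘ₗ d (n + 1) = 0)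
    (n : ℕ) : LinearMap.range (d n) ≤ cycles d n := by
  cases n with
  | zero => exact le_top
  | succ n =>
    rintro _ ⟨x, rfl⟩
    exact LinearMap.congr_fun (hd n) x

theorem cycles_eq_range_of_homologyFinrank_eq_zero [∀ n, FiniteDimensional K (X n)]
    {d : ∀ n, X (n + 1) →ₗ[K] X n} (hd : ∀ n, d n ∘ₗ d (n + 1) = 0) {n : ℕ}
    (h : homologyFinrank d n = 0) : cycles d n = LinearMap.range (d n) :=
  (Submodule.eq_of_le_of_finrank_le (range_le_cycles hd n) (Nat.le_of_sub_eq_zero h)).symm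

theorem map_cycles_le {Y : ℕ → Type*} [∀ n, AddCommGroup (Y n)] [∀ n, Module K (Y n)]
    {d : ∀ n, X (n + 1) →ₗ[K] X n} {e : ∀ n, Y (n + 1) →ₗ[K] Y n} {f : ∀ n, X n →ₗ[K] Y n}
    (hf : ∀ n, e n ∘ₗ f (n + 1) = f n ∘ₗ d n) (n : ℕ) :
    (cycles d n).map (f n) ≤ cycles e n := by
  cases n with
  | zero => exact le_top
  | succ n =>
    rintro _ ⟨x, hx, rfl⟩
    change e n (f (n + 1) x) = 0
    rw [← LinearMap.comp_apply, hf, LinearMap.comp_apply, LinearMap.mem_ker.mp hx, map_zero]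

theorem cycles_prodMap {Y : ℕ → Type*} [∀ n, AddCommGroup (Y n)] [∀ n, Module K (Y n)]
    (d : ∀ n, X (n + 1) →ₗ[K] X n) (e : ∀ n, Y (n + 1) →ₗ[K] Y n) (n : ℕ) :
    cycles (X := fun n => X n × Y n) (fun n => (d n).prodMap (e n)) n =
      (cycles d n).prod (cycles e n) := by
  cases n with
  | zero => exact Submodule.prod_top.symm
  | succ n => exact LinearMap.ker_prodMap _ _

theorem homologyFinrank_prodMap {Y : ℕ → Type*} [∀ n, AddCommGroup (Y n)] [∀ n, Module K (Y n)]
    [∀ n, FiniteDimensional K (X n)] [∀ n, FiniteDimensional K (Y n)]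
    {d : ∀ n, X (n + 1) →ₗ[K] X n} {e : ∀ n, Y (n + 1) →ₗ[K] Y n}
    (hd : ∀ n, d n ∘ₗ d (n + 1) = 0) (he : ∀ n, e n ∘ₗ e (n + 1) = 0) (n : ℕ) :
    homologyFinrank (X := fun n => X n × Y n) (fun n => (d n).prodMap (e n)) n =
      homologyFinrank d n + homologyFinrank e n := by
  have hd' := Submodule.finrank_mono (range_le_cycles hd n)
  have he' := Submodule.finrank_mono (range_le_cycles he n)
  unfold homologyFinrank
  rw [cycles_prodMap, LinearMap.range_prodMap, Submodule.finrank_prod, Submodule.finrank_prod]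
  omega

end Cycles

section ShortExact

variable {A B C : ℕ → Type*} [∀ n, AddCommGroup (A n)] [∀ n, Module K (A n)]
  [∀ n, AddCommGroup (B n)] [∀ n, Module K (B n)] [∀ n, AddCommGroup (C n)] [∀ n, Module K (C n)]
  {dA : ∀ n, A (n + 1) →ₗ[K] A n} {dB : ∀ n, B (n + 1) →ₗ[K] B n}
  {dC : ∀ n, C (n + 1) →ₗ[K] C n} {φ : ∀ n, A n →ₗ[K] B n} {ψ : ∀ n, B n →ₗ[K] C n}

structure IsShortExact (dA : ∀ n, A (n + 1) →ₗ[K] A n) (dB : ∀ n, B (n + 1) →ₗ[K] B n)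
    (dC : ∀ n, C (n + 1) →ₗ[K] C n) (φ : ∀ n, A n →ₗ[K] B n) (ψ : ∀ n, B n →ₗ[K] C n) :
    Prop where
  comm_left : ∀ n, dB n ∘ₗ φ (n + 1) = φ n ∘ₗ dA n
  comm_right : ∀ n, dC n ∘ₗ ψ (n + 1) = ψ n ∘ₗ dB n
  injective : ∀ n, Function.Injective (φ n)
  surjective : ∀ n, Function.Surjective (ψ n)
  exact : ∀ n, LinearMap.ker (ψ n) = LinearMap.range (φ n)

theorem IsShortExact.range_inf_ker (hs : IsShortExact dA dB dC φ ψ)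
    (hB : ∀ n, dB n ∘ₗ dB (n + 1) = 0)
    (hsplit : ∀ n, (cycles dA n).map (φ n) ≤ LinearMap.range (dB n)) (n : ℕ) :
    LinearMap.range (dB n) ⊓ LinearMap.ker (ψ n) = (cycles dA n).map (φ n) := by
  refine le_antisymm ?_ (le_inf (hsplit n) ?_)
  · rintro _ ⟨⟨y, rfl⟩, hy⟩
    obtain ⟨a, ha⟩ : dB n y ∈ LinearMap.range (φ n) := hs.exact n ▸ hy
    refine ⟨a, ?_, ha⟩
    cases n with
    | zero => trivial
    | succ n =>
      apply hs.injective n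
      have hcomm := LinearMap.congr_fun (hs.comm_left n) a
      rw [LinearMap.comp_apply, LinearMap.comp_apply] at hcomm
      rw [map_zero, ← hcomm, ha, ← LinearMap.comp_apply, hB, LinearMap.zero_apply]
  · rw [hs.exact]
    exact LinearMap.map_le_range

variable [∀ n, FiniteDimensional K (B n)]

theorem IsShortExact.finrank_range (hs : IsShortExact dA dB dC φ ψ)
    (hB : ∀ n, dB n ∘ₗ dB (n + 1) = 0)
    (hsplit : ∀ n, (cycles dA n).map (φ n) ≤ LinearMap.range (dB n)) (n : ℕ) :
    Module.finrank K (LinearMap.range (dB n)) =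
      Module.finrank K (LinearMap.range (dC n)) + Module.finrank K (cycles dA n) := by
  have hrange : LinearMap.range (dC n) = (LinearMap.range (dB n)).map (ψ n) := by
    rw [← LinearMap.range_comp_of_range_eq_top (dC n)
      (LinearMap.range_eq_top.mpr (hs.surjective (n + 1))), hs.comm_right, LinearMap.range_comp]
  have h := Submodule.finrank_map_add_finrank_inf_ker (ψ n) (LinearMap.range (dB n))
  rw [← hrange, hs.range_inf_ker hB hsplit,
    ← LinearEquiv.finrank_eq (Submodule.equivMapOfInjective _ (hs.injective n) _)] at h
  exact h.symm

theorem IsShortExact.finrank_cycles_succ (hs : IsShortExact dA dB dC φ ψ)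
    (hB : ∀ n, dB n ∘ₗ dB (n + 1) = 0)
    (hsplit : ∀ n, (cycles dA n).map (φ n) ≤ LinearMap.range (dB n)) (n : ℕ) :
    Module.finrank K (cycles dC (n + 1)) + Module.finrank K (A (n + 1)) =
      Module.finrank K (cycles dB (n + 1)) + Module.finrank K (cycles dA n) := by
  have hP : (LinearMap.ker (ψ n)).comap (dB n) = (LinearMap.ker (dC n)).comap (ψ (n + 1)) := by
    rw [← LinearMap.ker_comp, ← LinearMap.ker_comp, hs.comm_right]
  have hψ := Submodule.finrank_map_add_finrank_inf_ker (ψ (n + 1))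
    ((LinearMap.ker (dC n)).comap (ψ (n + 1)))
  rw [Submodule.map_comap_eq_of_surjective (hs.surjective _),
    inf_eq_right.mpr (LinearMap.ker_le_comap _), hs.exact,
    LinearMap.finrank_range_of_inj (hs.injective _)] at hψ
  have hdB := Submodule.finrank_map_add_finrank_inf_ker (dB n) ((LinearMap.ker (ψ n)).comap (dB n))
  rw [Submodule.map_comap_eq, hs.range_inf_ker hB hsplit,
    ← LinearEquiv.finrank_eq (Submodule.equivMapOfInjective _ (hs.injective n) _),
    inf_eq_right.mpr (LinearMap.ker_le_comap _), hP] at hdB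
  change Module.finrank K (LinearMap.ker (dC n)) + _ = Module.finrank K (LinearMap.ker (dB n)) + _
  omega

theorem IsShortExact.homologyFinrank_succ [∀ n, FiniteDimensional K (A n)]
    [∀ n, FiniteDimensional K (C n)] (hs : IsShortExact dA dB dC φ ψ)
    (hA : ∀ n, dA n ∘ₗ dA (n + 1) = 0) (hB : ∀ n, dB n ∘ₗ dB (n + 1) = 0)
    (hC : ∀ n, dC n ∘ₗ dC (n + 1) = 0)
    (hsplit : ∀ n, (cycles dA n).map (φ n) ≤ LinearMap.range (dB n)) (n : ℕ) :
    homologyFinrank dC (n + 1) = homologyFinrank dB (n + 1) + homologyFinrank dA n := by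
  have hZ := hs.finrank_cycles_succ hB hsplit n
  have hR := hs.finrank_range hB hsplit (n + 1)
  have hrankA : Module.finrank K (LinearMap.range (dA n)) + Module.finrank K (cycles dA (n + 1)) =
      Module.finrank K (A (n + 1)) :=
    LinearMap.finrank_range_add_finrank_ker (dA n)
  have hleA := Submodule.finrank_mono (range_le_cycles hA n)
  have hleB := Submodule.finrank_mono (range_le_cycles hB (n + 1))
  have hleC := Submodule.finrank_mono (range_le_cycles hC (n + 1))
  unfold homologyFinrank
  omega

theorem IsShortExact.homologyFinrank_zero [∀ n, FiniteDimensional K (A n)]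
    [∀ n, FiniteDimensional K (C n)] (hs : IsShortExact dA dB dC φ ψ)
    (hB : ∀ n, dB n ∘ₗ dB (n + 1) = 0)
    (hsplit : ∀ n, (cycles dA n).map (φ n) ≤ LinearMap.range (dB n)) :
    homologyFinrank dC 0 = homologyFinrank dB 0 := by
  have hR := hs.finrank_range hB hsplit 0
  have hrankψ := LinearMap.finrank_range_add_finrank_ker (ψ 0)
  rw [LinearMap.range_eq_top.mpr (hs.surjective 0), finrank_top, hs.exact,
    LinearMap.finrank_range_of_inj (hs.injective 0)] at hrankψ
  have hleC := Submodule.finrank_le (LinearMap.range (dC 0))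
  have hZA : Module.finrank K (cycles dA 0) = Module.finrank K (A 0) := finrank_top K (A 0)
  have hZB : Module.finrank K (cycles dB 0) = Module.finrank K (B 0) := finrank_top K (B 0)
  have hZC : Module.finrank K (cycles dC 0) = Module.finrank K (C 0) := finrank_top K (C 0)
  unfold homologyFinrank
  omega

end ShortExact

end LinearChain

attribute [local instance] MvPolynomial.gradedAlgebra

section HomogeneousComponents

variable {k : Type*} [Field k] {σ : Type*}

instance [Finite σ] (n : ℕ) : FiniteDimensional k (homogeneousSubmodule σ k n) :=
  Module.Finite.iff_fg.mpr (weightedHomogeneousSubmodule_fg k 1 (fun _ => one_ne_zero) n)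

theorem Ideal.IsHomogeneous.homogeneousComponent_mem {I : Ideal (MvPolynomial σ k)}
    (hI : I.IsHomogeneous (homogeneousSubmodule σ k)) {p : MvPolynomial σ k} (hp : p ∈ I)
    (n : ℕ) : homogeneousComponent n p ∈ I := by
  rw [← decomposition.decompose'_apply]
  exact hI n hp

end HomogeneousComponents

namespace CMReg

open LinearChain

section Components

variable {k : Type*} [Field k] {σ : Type*}

instance [Finite σ] (I : Ideal (MvPolynomial σ k)) (d : ℤ) : FiniteDimensional k (degComp I d) := by
  unfold degComp
  by_cases h : 0 ≤ d
  · rw [if_pos h]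
    infer_instance
  · rw [if_neg h]
    infer_instance

theorem degComp_mono {I J : Ideal (MvPolynomial σ k)} (h : I ≤ J) (d : ℤ) :
    degComp I d ≤ degComp J d := by
  unfold degComp
  split_ifs
  · exact inf_le_inf_right _ h
  · exact le_rfl

theorem degComp_inf (I J : Ideal (MvPolynomial σ k)) (d : ℤ) :
    degComp (I ⊓ J) d = degComp I d ⊓ degComp J d := by
  unfold degComp
  split_ifs
  · rw [Submodule.restrictScalars_inf, inf_inf_distrib_right]
  · exact inf_idem ⊥ |>.symm

theorem degComp_sup {I J : Ideal (MvPolynomial σ k)}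
    (hI : I.IsHomogeneous (homogeneousSubmodule σ k))
    (hJ : J.IsHomogeneous (homogeneousSubmodule σ k)) (d : ℤ) :
    degComp (I ⊔ J) d = degComp I d ⊔ degComp J d := by
  refine le_antisymm ?_ (sup_le (degComp_mono le_sup_left d) (degComp_mono le_sup_right d))
  unfold degComp
  split_ifs
  · rintro p ⟨hpIJ, hp⟩
    obtain ⟨a, ha, b, hb, rfl⟩ := Submodule.mem_sup.mp hpIJ
    rw [← (homogeneousComponent_of_mem hp).trans (if_pos rfl), map_add]
    exact Submodule.add_mem_sup ⟨hI.homogeneousComponent_mem ha _, homogeneousComponent_mem _ _⟩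
      ⟨hJ.homogeneousComponent_mem hb _, homogeneousComponent_mem _ _⟩
  · exact bot_le

theorem degComp_eq_bot_of_le_pow {I : Ideal (MvPolynomial σ k)} {n : ℕ}
    (hI : I ≤ idealOfVars σ k ^ n) {d : ℤ} (hd : d < n) : degComp I d = ⊥ := by
  unfold degComp
  split_ifs with h0
  · refine (Submodule.eq_bot_iff _).mpr fun p ⟨hpI, hp⟩ => ?_
    ext m
    rw [coeff_zero]
    rcases lt_or_ge m.degree n with hlt | hle
    · exact (mem_pow_idealOfVars_iff' n p).mp (hI hpI) m hlt
    · exact hp.coeff_eq_zero (by omega)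
  · rfl

theorem KD.eq_zero {I : Ideal (MvPolynomial σ k)} {i j : ℕ} (h : degComp I ((j : ℤ) - i) = ⊥)
    (f : KD I i j) : f = 0 :=
  funext fun S => Subtype.ext ((Submodule.mem_bot k).mp (h ▸ (f S).2))

-- Extending `f` by `0` lets sums over `insert x S` be written without cardinality proofs.
def KD.eval {I : Ideal (MvPolynomial σ k)} {i j : ℕ} (f : KD I i j) (T : Finset σ) :
    MvPolynomial σ k :=
  if h : T.card = i then f ⟨T, h⟩ else 0

theorem KD.eval_of_card {I : Ideal (MvPolynomial σ k)} {i j : ℕ} (f : KD I i j) {T : Finset σ}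
    (h : T.card = i) : f.eval T = f ⟨T, h⟩ :=
  dif_pos h

theorem neg_one_pow_card_filter_lt_mul_swap [DecidableEq σ] [LinearOrder σ] {S : Finset σ}
    {x y : σ} (hx : x ∉ S) (hy : y ∉ S) (hxy : x ≠ y) :
    (-1 : k) ^ (S.filter (· < x)).card * (-1 : k) ^ ((insert x S).filter (· < y)).card =
      -((-1 : k) ^ (S.filter (· < y)).card * (-1 : k) ^ ((insert y S).filter (· < x)).card) := by
  rcases hxy.lt_or_gt with h | h
  · rw [Finset.filter_insert, if_pos h, Finset.filter_insert, if_neg (not_lt.mpr h.le),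
      Finset.card_insert_of_notMem (fun hc => hx (Finset.mem_filter.mp hc).1), pow_succ]
    ring
  · rw [Finset.filter_insert, if_neg (not_lt.mpr h.le), Finset.filter_insert, if_pos h,
      Finset.card_insert_of_notMem (fun hc => hy (Finset.mem_filter.mp hc).1), pow_succ]
    ring

def koszulInclusion {I J : Ideal (MvPolynomial σ k)} (h : I ≤ J) (i j : ℕ) :
    KD I i j →ₗ[k] KD J i j :=
  (Submodule.inclusion (degComp_mono h _)).compLeft _

theorem koszulInclusion_injective {I J : Ideal (MvPolynomial σ k)} (h : I ≤ J) (i j : ℕ) :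
    Function.Injective (koszulInclusion h i j) := fun _ _ hfg =>
  funext fun S => Subtype.ext (congrArg (fun f => (f S : MvPolynomial σ k)) hfg)

def koszulDiagonal (U V : Ideal (MvPolynomial σ k)) (i j : ℕ) :
    KD (U ⊓ V) i j →ₗ[k] KD U i j × KD V i j :=
  (koszulInclusion inf_le_left i j).prod (koszulInclusion inf_le_right i j)

def koszulDifference (U V : Ideal (MvPolynomial σ k)) (i j : ℕ) :
    KD U i j × KD V i j →ₗ[k] KD (U ⊔ V) i j :=
  koszulInclusion le_sup_left i j ∘ₗ LinearMap.fst k _ _ -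
    koszulInclusion le_sup_right i j ∘ₗ LinearMap.snd k _ _

theorem ker_koszulDifference (U V : Ideal (MvPolynomial σ k)) (i j : ℕ) :
    LinearMap.ker (koszulDifference U V i j) = LinearMap.range (koszulDiagonal U V i j) := by
  refine le_antisymm (fun x hx => ?_) ?_
  · have hcoe : ∀ S, (x.1 S : MvPolynomial σ k) = x.2 S := fun S =>
      sub_eq_zero.mp (congrArg (fun f => (f S : MvPolynomial σ k)) hx)
    refine ⟨fun S => ⟨x.1 S, ?_⟩, Prod.ext rfl (funext fun S => Subtype.ext (hcoe S))⟩
    rw [degComp_inf]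
    exact ⟨(x.1 S).2, hcoe S ▸ (x.2 S).2⟩
  · rintro _ ⟨w, rfl⟩
    exact LinearMap.mem_ker.mpr (funext fun S => Subtype.ext (sub_self _))

theorem koszulDifference_surjective {U V : Ideal (MvPolynomial σ k)}
    (hU : U.IsHomogeneous (homogeneousSubmodule σ k))
    (hV : V.IsHomogeneous (homogeneousSubmodule σ k)) (i j : ℕ) :
    Function.Surjective (koszulDifference U V i j) := by
  intro f
  have hf : ∀ S, (f S : MvPolynomial σ k) ∈ degComp U _ ⊔ degComp V _ := fun S => by
    rw [← degComp_sup hU hV]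
    exact (f S).2
  choose u hu v hv huv using fun S => Submodule.mem_sup.mp (hf S)
  refine ⟨(fun S => ⟨u S, hu S⟩, fun S => ⟨-v S, neg_mem (hv S)⟩), ?_⟩
  exact funext fun S => Subtype.ext ((sub_neg_eq_add _ _).trans (huv S))

end Components

variable {k : Type*} [Field k] {σ : Type*} [Fintype σ] [DecidableEq σ] [LinearOrder σ]

theorem kdiff_apply_coe_s18 (I : Ideal (MvPolynomial σ k)) (i j : ℕ) (f : KD I (i + 1) j)
    (S : {S : Finset σ // S.card = i}) :
    (kdiff I i j f S : MvPolynomial σ k) =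
      ∑ x ∈ S.1ᶜ, (-1 : k) ^ (S.1.filter (· < x)).card • (X x * f.eval (insert x S.1)) := by
  rw [← Finset.sum_attach]
  change ((∑ a ∈ S.1ᶜ.attach, _ : degComp I ((j : ℤ) - i)) : MvPolynomial σ k) = _
  rw [AddSubmonoidClass.coe_finsetSum]
  refine Finset.sum_congr rfl fun a _ => ?_
  rw [SetLike.val_smul, KD.eval_of_card f]

theorem kdiff_comp_kdiff (I : Ideal (MvPolynomial σ k)) (i j : ℕ) :
    kdiff I i j ∘ₗ kdiff I (i + 1) j = 0 := by
  refine LinearMap.ext fun f => funext fun S => Subtype.ext ?_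
  change (kdiff I i j (kdiff I (i + 1) j f) S : MvPolynomial σ k) = 0
  have hexpand : ∀ x ∈ S.1ᶜ, (-1 : k) ^ (S.1.filter (· < x)).card •
        (X x * (kdiff I (i + 1) j f).eval (insert x S.1)) =
      ∑ y ∈ (insert x S.1)ᶜ, ((-1 : k) ^ (S.1.filter (· < x)).card *
          (-1 : k) ^ ((insert x S.1).filter (· < y)).card) •
        (X x * (X y * f.eval (insert y (insert x S.1)))) := by
    intro x hx
    rw [KD.eval_of_card _ (by rw [Finset.card_insert_of_notMem (Finset.mem_compl.mp hx), S.2]),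
      kdiff_apply_coe_s18, Finset.mul_sum, Finset.smul_sum]
    exact Finset.sum_congr rfl fun y _ => by rw [mul_smul_comm, smul_smul]
  rw [kdiff_apply_coe_s18, Finset.sum_congr rfl hexpand, Finset.sum_sigma']
  -- the terms indexed by `(x, y)` and `(y, x)` cancel
  refine Finset.sum_involution (fun p _ => ⟨p.2, p.1⟩) (fun p hp => ?_) (fun p hp _ hswap => ?_)
    (fun p hp => ?_) (fun _ _ => rfl)
  all_goals
    obtain ⟨hx, hy⟩ := Finset.mem_sigma.mp hp
    have hy' := Finset.mem_compl.mp hy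
    have hyS : p.2 ∉ S.1 := fun hc => hy' (Finset.mem_insert_of_mem hc)
    have hxy : p.1 ≠ p.2 := fun hc => hy' (hc ▸ Finset.mem_insert_self _ _)
  · rw [neg_one_pow_card_filter_lt_mul_swap (Finset.mem_compl.mp hx) hyS hxy,
      Finset.insert_comm p.2, neg_smul, mul_left_comm (X p.2), neg_add_cancel]
  · exact hxy (congrArg Sigma.fst hswap).symm
  · refine Finset.mem_sigma.mpr ⟨Finset.mem_compl.mpr hyS, Finset.mem_compl.mpr ?_⟩
    intro hc
    rcases Finset.mem_insert.mp hc with hc | hc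
    · exact hxy hc
    · exact Finset.mem_compl.mp hx hc

theorem kdiff_comp_koszulInclusion {I J : Ideal (MvPolynomial σ k)} (h : I ≤ J) (i j : ℕ) :
    kdiff J i j ∘ₗ koszulInclusion h (i + 1) j = koszulInclusion h i j ∘ₗ kdiff I i j := by
  refine LinearMap.ext fun f => funext fun S => Subtype.ext ?_
  change (kdiff J i j (koszulInclusion h (i + 1) j f) S : MvPolynomial σ k) = kdiff I i j f S
  rw [kdiff_apply_coe_s18, kdiff_apply_coe_s18]
  refine Finset.sum_congr rfl fun x _ => ?_
  unfold KD.eval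
  split_ifs <;> rfl

theorem isShortExact_koszul {U V : Ideal (MvPolynomial σ k)}
    (hU : U.IsHomogeneous (homogeneousSubmodule σ k))
    (hV : V.IsHomogeneous (homogeneousSubmodule σ k)) (j : ℕ) :
    IsShortExact (fun n => kdiff (U ⊓ V) n j)
      (fun n => (kdiff U n j).prodMap (kdiff V n j)) (fun n => kdiff (U ⊔ V) n j)
      (fun n => koszulDiagonal U V n j) (fun n => koszulDifference U V n j) where
  comm_left n := by
    refine LinearMap.ext fun w => Prod.ext ?_ ?_
    · exact LinearMap.congr_fun (kdiff_comp_koszulInclusion inf_le_left n j) w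
    · exact LinearMap.congr_fun (kdiff_comp_koszulInclusion inf_le_right n j) w
  comm_right n := by
    refine LinearMap.ext fun x => ?_
    simp only [koszulDifference, LinearMap.comp_apply, LinearMap.sub_apply, map_sub,
      LinearMap.fst_apply, LinearMap.snd_apply, LinearMap.prodMap_apply]
    rw [← LinearMap.comp_apply (kdiff _ n j), kdiff_comp_koszulInclusion,
      ← LinearMap.comp_apply (kdiff _ n j), kdiff_comp_koszulInclusion]
    rfl
  injective n := fun _ _ h => koszulInclusion_injective inf_le_left n j (congrArg Prod.fst h)
  surjective n := koszulDifference_surjective hU hV n j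
  exact n := ker_koszulDifference U V n j

theorem cyclesAt_eq_cycles (I : Ideal (MvPolynomial σ k)) (i j : ℕ) :
    cyclesAt I i j = cycles (X := fun n => KD I n j) (fun n => kdiff I n j) i := by
  cases i <;> rfl

theorem bettiNum_eq_homologyFinrank (I : Ideal (MvPolynomial σ k)) (i j : ℕ) :
    bettiNum I i j = homologyFinrank (X := fun n => KD I n j) (fun n => kdiff I n j) i := by
  rw [bettiNum, homologyFinrank, cyclesAt_eq_cycles]

theorem bettiNum_eq_zero_of_reg_le {T : Ideal (MvPolynomial σ k)} {d : ℕ} (h : reg T ≤ d)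
    {r j : ℕ} (hj : r + d < j) : bettiNum T r j = 0 := by
  by_contra hb
  have hmem : ((j - r : ℕ) : ℕ∞) ∈
      {d : ℕ∞ | ∃ i j : ℕ, bettiNum T i j ≠ 0 ∧ ((j - i : ℕ) : ℕ∞) = d} := ⟨r, j, hb, rfl⟩
  have hle : ((j - r : ℕ) : ℕ∞) ≤ d := (le_sSup hmem).trans h
  have := Nat.cast_le.mp hle
  omega

theorem map_cycles_le_range_of_reg_le {W T : Ideal (MvPolynomial σ k)} (hWT : W ≤ T) {d : ℕ}
    (hreg : reg T ≤ d) (hT : T ≤ idealOfVars σ k ^ d) (hW : W ≤ idealOfVars σ k ^ (d + 1))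
    (r j : ℕ) :
    (cyclesAt W r j).map (koszulInclusion hWT r j) ≤ LinearMap.range (kdiff T r j) := by
  rcases lt_trichotomy j (r + d) with hj | rfl | hj
  · rintro _ ⟨f, -, rfl⟩
    rw [KD.eq_zero (degComp_eq_bot_of_le_pow hT (by omega)) (koszulInclusion hWT r j f)]
    exact zero_mem _
  · rintro _ ⟨f, -, rfl⟩
    rw [KD.eq_zero (degComp_eq_bot_of_le_pow hW (by push_cast; omega)) f, map_zero]
    exact zero_mem _
  · rw [← cycles_eq_range_of_homologyFinrank_eq_zero (kdiff_comp_kdiff T · j)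
      ((bettiNum_eq_homologyFinrank T r j).symm.trans (bettiNum_eq_zero_of_reg_le hreg hj)),
      cyclesAt_eq_cycles]
    exact map_cycles_le (K := k) (X := fun n => KD W n j) (Y := fun n => KD T n j)
      (f := fun n => koszulInclusion hWT n j) (kdiff_comp_koszulInclusion hWT · j) r

theorem prodMap_kdiff_comp_prodMap_kdiff (U V : Ideal (MvPolynomial σ k)) (n j : ℕ) :
    (kdiff U n j).prodMap (kdiff V n j) ∘ₗ (kdiff U (n + 1) j).prodMap (kdiff V (n + 1) j) = 0 := by
  rw [LinearMap.prodMap_comp, kdiff_comp_kdiff, kdiff_comp_kdiff, LinearMap.prodMap_zero]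

section LinearResolution

variable {U V : Ideal (MvPolynomial σ k)} {d : ℕ}

theorem koszulDiagonal_map_cycles_le_range (hU : reg U ≤ d) (hV : reg V ≤ d)
    (hUd : U ≤ idealOfVars σ k ^ d) (hVd : V ≤ idealOfVars σ k ^ d)
    (hUV : U ⊓ V ≤ idealOfVars σ k ^ (d + 1)) (j r : ℕ) :
    (cycles (X := fun n => KD (U ⊓ V) n j) (fun n => kdiff (U ⊓ V) n j) r).map
      (koszulDiagonal U V r j) ≤ LinearMap.range ((kdiff U r j).prodMap (kdiff V r j)) := by
  rw [← cyclesAt_eq_cycles, LinearMap.range_prodMap]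
  rintro _ ⟨w, hw, rfl⟩
  exact ⟨map_cycles_le_range_of_reg_le inf_le_left hU hUd hUV r j ⟨w, hw, rfl⟩,
    map_cycles_le_range_of_reg_le inf_le_right hV hVd hUV r j ⟨w, hw, rfl⟩⟩

theorem bettiNum_sup_succ_of_linear (hUh : U.IsHomogeneous (homogeneousSubmodule σ k))
    (hVh : V.IsHomogeneous (homogeneousSubmodule σ k)) (hU : reg U ≤ d) (hV : reg V ≤ d)
    (hUd : U ≤ idealOfVars σ k ^ d) (hVd : V ≤ idealOfVars σ k ^ d)
    (hUV : U ⊓ V ≤ idealOfVars σ k ^ (d + 1)) (i j : ℕ) :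
    bettiNum (U ⊔ V) (i + 1) j =
      bettiNum U (i + 1) j + bettiNum V (i + 1) j + bettiNum (U ⊓ V) i j := by
  simp only [bettiNum_eq_homologyFinrank]
  rw [(isShortExact_koszul hUh hVh j).homologyFinrank_succ (kdiff_comp_kdiff _ · j)
      (prodMap_kdiff_comp_prodMap_kdiff U V · j) (kdiff_comp_kdiff _ · j)
      (koszulDiagonal_map_cycles_le_range hU hV hUd hVd hUV j),
    homologyFinrank_prodMap (X := fun n => KD U n j) (Y := fun n => KD V n j)
      (kdiff_comp_kdiff U · j) (kdiff_comp_kdiff V · j)]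

theorem bettiNum_sup_zero_of_linear (hUh : U.IsHomogeneous (homogeneousSubmodule σ k))
    (hVh : V.IsHomogeneous (homogeneousSubmodule σ k)) (hU : reg U ≤ d) (hV : reg V ≤ d)
    (hUd : U ≤ idealOfVars σ k ^ d) (hVd : V ≤ idealOfVars σ k ^ d)
    (hUV : U ⊓ V ≤ idealOfVars σ k ^ (d + 1)) (j : ℕ) :
    bettiNum (U ⊔ V) 0 j = bettiNum U 0 j + bettiNum V 0 j := by
  simp only [bettiNum_eq_homologyFinrank]
  rw [(isShortExact_koszul hUh hVh j).homologyFinrank_zero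
      (prodMap_kdiff_comp_prodMap_kdiff U V · j)
      (koszulDiagonal_map_cycles_le_range hU hV hUd hVd hUV j),
    homologyFinrank_prodMap (X := fun n => KD U n j) (Y := fun n => KD V n j)
      (kdiff_comp_kdiff U · j) (kdiff_comp_kdiff V · j)]

end LinearResolution

end CMReg

section EdgeIdeal

variable {k : Type*} [Field k] {V : Type*}

theorem edgeIdeal_le_pow_two (G : SimpleGraph V) : edgeIdeal k G ≤ idealOfVars V k ^ 2 := by
  rw [edgeIdeal, Ideal.span_le]
  rintro _ ⟨u, v, -, rfl⟩
  rw [pow_two]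
  exact Ideal.mul_mem_mul (Ideal.subset_span ⟨u, rfl⟩) (Ideal.subset_span ⟨v, rfl⟩)

theorem edgeIdeal_isHomogeneous (G : SimpleGraph V) :
    (edgeIdeal k G).IsHomogeneous (homogeneousSubmodule V k) :=
  Ideal.homogeneous_span _ _ fun _ ⟨u, v, _, hp⟩ =>
    hp ▸ ⟨2, (isHomogeneous_X k u).mul (isHomogeneous_X k v)⟩

end EdgeIdeal

theorem betti_splitting_of_linear_general {k : Type*} [Field k] {V : Type*}
    [Fintype V] [DecidableEq V] [LinearOrder V] (G G₁ G₂ : SimpleGraph V)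
    (hsum : edgeIdeal k G = edgeIdeal k G₁ + edgeIdeal k G₂)
    (hU : CMReg.reg (edgeIdeal k G₁) = (2 : ℕ∞))
    (hV : CMReg.reg (edgeIdeal k G₂) = (2 : ℕ∞))
    (hUm : edgeIdeal k G₁ ⊓ edgeIdeal k G₂ ≤
      Ideal.span (Set.range (MvPolynomial.X : V → MvPolynomial V k)) * edgeIdeal k G₁) :
    (∀ i j : ℕ, CMReg.bettiNum (edgeIdeal k G) (i + 1) j =
        CMReg.bettiNum (edgeIdeal k G₁) (i + 1) j + CMReg.bettiNum (edgeIdeal k G₂) (i + 1) j +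
          CMReg.bettiNum (edgeIdeal k G₁ ⊓ edgeIdeal k G₂) i j) ∧
    (∀ j : ℕ, CMReg.bettiNum (edgeIdeal k G) 0 j =
        CMReg.bettiNum (edgeIdeal k G₁) 0 j + CMReg.bettiNum (edgeIdeal k G₂) 0 j) := by
  have hUV : edgeIdeal k G₁ ⊓ edgeIdeal k G₂ ≤ idealOfVars V k ^ (2 + 1) := by
    rw [pow_succ']
    exact hUm.trans (Ideal.mul_mono_right (edgeIdeal_le_pow_two G₁))
  rw [hsum, Submodule.add_eq_sup]
  exact ⟨CMReg.bettiNum_sup_succ_of_linear (edgeIdeal_isHomogeneous G₁)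
      (edgeIdeal_isHomogeneous G₂) hU.le hV.le (edgeIdeal_le_pow_two G₁)
      (edgeIdeal_le_pow_two G₂) hUV,
    CMReg.bettiNum_sup_zero_of_linear (edgeIdeal_isHomogeneous G₁) (edgeIdeal_isHomogeneous G₂)
      hU.le hV.le (edgeIdeal_le_pow_two G₁) (edgeIdeal_le_pow_two G₂) hUV⟩

/-- If `I(G) = U + V` where `U, V` are edge ideals of subgraphs of `G` having
2-linear resolutions (i.e. `reg U = reg V = 2`; edge ideals are generated in degree 2), and
`U ∩ V ⊆ m·U`, `U ∩ V ⊆ m·V` for the graded maximal ideal `m`, then `I(G) = U + V` is a Betti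
splitting: `β_{i,j}(I(G)) = β_{i,j}(U) + β_{i,j}(V) + β_{i-1,j}(U ∩ V)` for all `i, j`
(with `β_{-1,j} = 0`). -/
theorem betti_splitting_of_linear {k : Type*} [Field k] {V : Type*}
    [Fintype V] [DecidableEq V] [LinearOrder V] (G G₁ G₂ : SimpleGraph V)
    (h₁ : G₁ ≤ G) (h₂ : G₂ ≤ G)
    (hsum : edgeIdeal k G = edgeIdeal k G₁ + edgeIdeal k G₂)
    (hU : CMReg.reg (edgeIdeal k G₁) = (2 : ℕ∞))
    (hV : CMReg.reg (edgeIdeal k G₂) = (2 : ℕ∞))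
    (hUm : edgeIdeal k G₁ ⊓ edgeIdeal k G₂ ≤
      Ideal.span (Set.range (MvPolynomial.X : V → MvPolynomial V k)) * edgeIdeal k G₁)
    (hVm : edgeIdeal k G₁ ⊓ edgeIdeal k G₂ ≤
      Ideal.span (Set.range (MvPolynomial.X : V → MvPolynomial V k)) * edgeIdeal k G₂) :
    (∀ i j : ℕ, CMReg.bettiNum (edgeIdeal k G) (i + 1) j =
        CMReg.bettiNum (edgeIdeal k G₁) (i + 1) j + CMReg.bettiNum (edgeIdeal k G₂) (i + 1) j +
          CMReg.bettiNum (edgeIdeal k G₁ ⊓ edgeIdeal k G₂) i j) ∧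
    (∀ j : ℕ, CMReg.bettiNum (edgeIdeal k G) 0 j =
        CMReg.bettiNum (edgeIdeal k G₁) 0 j + CMReg.bettiNum (edgeIdeal k G₂) 0 j) :=
  betti_splitting_of_linear_general G G₁ G₂ hsum hU hV hUm
end
end
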